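/- arXiv:2506.05747 — 7 statements merged into one kernel-verified Lean document; each statement's English description precedes it below -/
import Mathlib

section
/- Consider a zero-sum normal-form game with payoff matrix A ∈ ℝ^{m×n} that has a unique Nash equilibrium (x*, y*) lying in the interior of Δ^m × Δ^n, and assume (x*, y*) ≠ ((1/m)·1_m, (1/n)·1_n). Then for every μ > 0 with μ ≠ ((1_m/m)ᵀ A (1_n/n) − v*) / (‖x*‖² − 1/m), the minimax strategy x^μ of the symmetrically perturbed game satisfies x^μ ≠ x*; and for every μ > 0 with μ ≠ (v* − (1_m/m)ᵀ A (1_n/n)) / (‖y*‖² − 1/n), the maximin strategy y^μ of the symmetrically perturbed game satisfies y^μ ≠ y*. -/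
open scoped RealInnerProductSpace Classical

noncomputable section

abbrev E (k : ℕ) : Type := EuclideanSpace ℝ (Fin k)

/-- Interpret a plain vector as an element of Euclidean space. -/
def toE {k : ℕ} (v : Fin k → ℝ) : E k := (WithLp.equiv 2 (Fin k → ℝ)).symm v

/-- The bilinear payoff `xᵀ A y`. -/
def pay {m n : ℕ} (A : Matrix (Fin m) (Fin n) ℝ) (x : E m) (y : E n) : ℝ :=
  ⟪x, toE (A.mulVec y)⟫

/-- Euclidean projection onto a set (well-defined for nonempty closed convex sets). -/
def projOn {k : ℕ} (S : Set (E k)) (x : E k) : E k :=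
  if h : ∃ p ∈ S, ∀ q ∈ S, ‖x - p‖ ≤ ‖x - q‖ then h.choose else x

/-- The largest singular value (ℓ²-operator norm) of a matrix. -/
def matNorm {m n : ℕ} (A : Matrix (Fin m) (Fin n) ℝ) : ℝ :=
  ‖(Matrix.toEuclideanLin A).toContinuousLinearMap‖

def gmax {m n : ℕ} (A : Matrix (Fin m) (Fin n) ℝ) (Y : Set (E n)) (x : E m) : ℝ :=
  sSup ((pay A x) '' Y)

def vStar {m n : ℕ} (A : Matrix (Fin m) (Fin n) ℝ) (X : Set (E m)) (Y : Set (E n)) : ℝ :=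
  sInf (gmax A Y '' X)

def minimaxSet {m n : ℕ} (A : Matrix (Fin m) (Fin n) ℝ) (X : Set (E m)) (Y : Set (E n)) :
    Set (E m) :=
  {x | x ∈ X ∧ ∀ x' ∈ X, gmax A Y x ≤ gmax A Y x'}

def hmin {m n : ℕ} (A : Matrix (Fin m) (Fin n) ℝ) (X : Set (E m)) (μ : ℝ) (y : E n) : ℝ :=
  sInf ((fun x => pay A x y + μ / 2 * ‖x‖ ^ 2) '' X)

def maximinSet {m n : ℕ} (A : Matrix (Fin m) (Fin n) ℝ) (X : Set (E m)) (Y : Set (E n))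
    (μ : ℝ) : Set (E n) :=
  {y | y ∈ Y ∧ ∀ y' ∈ Y, hmin A X μ y' ≤ hmin A X μ y}

def diamXY {m n : ℕ} (X : Set (E m)) (Y : Set (E n)) : ℝ :=
  sSup {d | ∃ x ∈ X, ∃ y ∈ Y, ∃ x' ∈ X, ∃ y' ∈ Y,
    d = Real.sqrt (‖x - x'‖ ^ 2 + ‖y - y'‖ ^ 2)}

def prodNorm {m n : ℕ} (u : E m) (v : E n) : ℝ := Real.sqrt (‖u‖ ^ 2 + ‖v‖ ^ 2)

def simplex (k : ℕ) : Set (E k) := {x | (∀ i, 0 ≤ x i) ∧ ∑ i, x i = 1}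

def unif (k : ℕ) : E k := WithLp.toLp 2 (fun _ => (k : ℝ)⁻¹)

def isPolytope {k : ℕ} (S : Set (E k)) : Prop :=
  ∃ s : Finset (E k), s.Nonempty ∧ S = convexHull ℝ (s : Set (E k))

section Helpers

variable {k m n : ℕ}

def lin (c w : Fin k → ℝ) : ℝ := ∑ j, c j * w j

lemma unif_mem (hk : 0 < k) : unif k ∈ simplex k := by
  have hk' : (k : ℝ) ≠ 0 := Nat.cast_ne_zero.mpr hk.ne'
  constructor
  · intro i; show (0:ℝ) ≤ (k : ℝ)⁻¹; positivity
  · simp [unif, Finset.sum_const, Finset.card_univ, nsmul_eq_mul]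
    field_simp

lemma normsq (x : E k) : ‖x‖ ^ 2 = ∑ i, x i ^ 2 := by
  rw [EuclideanSpace.norm_eq, Real.sq_sqrt (Finset.sum_nonneg fun i _ => sq_nonneg _)]
  simp [Real.norm_eq_abs, sq_abs]

lemma pay_left (A : Matrix (Fin m) (Fin n) ℝ) (x : E m) (y : E n) :
    pay A x y = lin (fun i => A.mulVec y i) x := by
  simp [pay, toE, PiLp.inner_apply, RCLike.inner_apply, lin, mul_comm]

lemma pay_right (A : Matrix (Fin m) (Fin n) ℝ) (x : E m) (y : E n) :
    pay A x y = lin (fun j => ∑ i, x i * A i j) y := by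
  simp only [pay_left, lin, Matrix.mulVec, dotProduct, Finset.sum_mul, Finset.mul_sum]
  rw [Finset.sum_comm]
  exact Finset.sum_congr rfl fun j _ => Finset.sum_congr rfl fun i _ => by ring

lemma lin_comb (c z x : Fin k → ℝ) (t : ℝ) :
    lin c (fun i => z i + t * (z i - x i)) = (1 + t) * lin c z - t * lin c x := by
  simp only [lin, Finset.mul_sum, ← Finset.sum_sub_distrib]
  exact Finset.sum_congr rfl fun i _ => by ring

lemma lin_split (c z w : Fin k → ℝ) (μ : ℝ) :
    lin (fun i => c i + μ * z i) w = lin c w + μ * lin z w := by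
  simp only [lin, add_mul, Finset.sum_add_distrib, Finset.mul_sum]
  congr 1
  exact Finset.sum_congr rfl fun i _ => by ring

lemma lin_self (z : Fin k → ℝ) : lin z z = ∑ i, z i ^ 2 := by
  simp [lin, sq]

lemma lin_neg (c w : Fin k → ℝ) : lin (fun j => -c j) w = -lin c w := by
  simp [lin]

lemma lin_unif_right {w : E k} (hw : w ∈ simplex k) : lin w (unif k) = 1 / k := by
  have : lin w (unif k) = (∑ i, w i) * (k : ℝ)⁻¹ := by
    simp [lin, unif, Finset.sum_mul]
  rw [this, hw.2, one_mul, one_div]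

lemma lin_of_const (hk : 0 < k) {f : Fin k → ℝ} (hf : ∀ i j, f i = f j) {w : E k}
    (hw : w ∈ simplex k) : lin f w = f ⟨0, hk⟩ := by
  unfold lin
  rw [Finset.sum_congr rfl fun j _ => by rw [hf j ⟨0, hk⟩], ← Finset.mul_sum, hw.2, mul_one]

lemma unif_sumsq (hk : 0 < k) : ∑ i, unif k i ^ 2 = 1 / k := by
  have hk' : (k : ℝ) ≠ 0 := Nat.cast_ne_zero.mpr hk.ne'
  simp [unif, Finset.sum_const, Finset.card_univ, nsmul_eq_mul]
  field_simp

lemma sumsq_key (hk : 0 < k) {w : E k} (hw : w ∈ simplex k) :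
    ∑ i, (w i - 1 / k) ^ 2 = (∑ i, w i ^ 2) - 1 / k := by
  have hk' : (k : ℝ) ≠ 0 := Nat.cast_ne_zero.mpr hk.ne'
  have h2 : ∀ i : Fin k, (w i - 1 / k) ^ 2 = w i ^ 2 - 2 / k * w i + 1 / k ^ 2 := by
    intro i; field_simp; ring
  rw [Finset.sum_congr rfl fun i _ => h2 i]
  rw [Finset.sum_add_distrib, Finset.sum_sub_distrib, ← Finset.mul_sum, hw.2,
    Finset.sum_const, Finset.card_univ, Fintype.card_fin, nsmul_eq_mul]
  field_simp
  ring

lemma eq_unif_of_sumsq_le (hk : 0 < k) {w : E k} (hw : w ∈ simplex k)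
    (h : ∑ i, w i ^ 2 ≤ 1 / k) : w = unif k := by
  have key := sumsq_key hk hw
  have h0 : ∑ i, (w i - 1 / k) ^ 2 = 0 := by
    have hnn : 0 ≤ ∑ i, (w i - 1 / (k:ℝ)) ^ 2 :=
      Finset.sum_nonneg fun i _ => sq_nonneg _
    linarith
  ext i
  have := (Finset.sum_eq_zero_iff_of_nonneg (fun i _ => sq_nonneg (w i - 1 / (k:ℝ)))).mp h0 i
    (Finset.mem_univ i)
  have : w i = 1 / k := by nlinarith [this]
  simpa [unif, one_div] using this

end Helpers
section Helpers2

variable {k : ℕ}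

lemma coord_le_one {w : E k} (hw : w ∈ simplex k) (i : Fin k) : w i ≤ 1 := by
  have := Finset.single_le_sum (f := fun j => w j) (fun j _ => hw.1 j) (Finset.mem_univ i)
  rw [hw.2] at this
  exact this

lemma interior_move (hk : 0 < k) {z x : E k} (hz : z ∈ simplex k) (hpos : ∀ i, 0 < z i)
    (hx : x ∈ simplex k) :
    ∃ t : ℝ, 0 < t ∧ (WithLp.toLp 2 (fun i => z i + t * (z i - x i)) : E k) ∈ simplex k := by
  haveI : Nonempty (Fin k) := ⟨⟨0, hk⟩⟩
  have hne : (Finset.univ : Finset (Fin k)).Nonempty := Finset.univ_nonempty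
  set t := Finset.univ.inf' hne z with ht
  have ht0 : 0 < t := by
    rw [ht, Finset.lt_inf'_iff]
    exact fun i _ => hpos i
  refine ⟨t, ht0, ?_, ?_⟩
  · intro i
    have h1 : t ≤ z i := Finset.inf'_le _ (Finset.mem_univ i)
    have h2 : x i ≤ 1 := coord_le_one hx i
    have h3 : 0 ≤ x i := hx.1 i
    have h4 : 0 < z i := hpos i
    show 0 ≤ z i + t * (z i - x i)
    nlinarith
  · show ∑ i, (z i + t * (z i - x i)) = 1
    rw [Finset.sum_add_distrib, ← Finset.mul_sum, Finset.sum_sub_distrib, hz.2, hx.2]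
    simp [hz.2]

lemma lin_const_of_max (hk : 0 < k) {c : Fin k → ℝ} {z : E k} (hz : z ∈ simplex k)
    (hpos : ∀ i, 0 < z i) (hmax : ∀ w ∈ simplex k, lin c w ≤ lin c z) :
    ∀ w ∈ simplex k, lin c w = lin c z := by
  intro w hw
  refine le_antisymm (hmax w hw) ?_
  obtain ⟨t, ht, hmem⟩ := interior_move hk hz hpos hw
  have h := hmax _ hmem
  rw [WithLp.ofLp_toLp, lin_comb] at h
  nlinarith

lemma lin_const_of_min (hk : 0 < k) {c : Fin k → ℝ} {z : E k} (hz : z ∈ simplex k)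
    (hpos : ∀ i, 0 < z i) (hmin : ∀ w ∈ simplex k, lin c z ≤ lin c w) :
    ∀ w ∈ simplex k, lin c w = lin c z := by
  intro w hw
  refine le_antisymm ?_ (hmin w hw)
  obtain ⟨t, ht, hmem⟩ := interior_move hk hz hpos hw
  have h := hmin _ hmem
  rw [WithLp.ofLp_toLp, lin_comb] at h
  nlinarith

end Helpers2
section Helpers3

variable {k : ℕ}

lemma foc (hk : 0 < k) {c : Fin k → ℝ} {z : E k} {μ : ℝ} (hμ : 0 < μ)
    (hz : z ∈ simplex k) (hpos : ∀ i, 0 < z i)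
    (hmin : ∀ w ∈ simplex k,
      lin c z + μ / 2 * ∑ l, z l ^ 2 ≤ lin c w + μ / 2 * ∑ l, w l ^ 2) :
    ∀ i j, c i + μ * z i = c j + μ * z j := by
  intro i j
  by_cases hij : i = j
  · rw [hij]
  set L : ℝ := c i + μ * z i - (c j + μ * z j) with hL
  have key : ∀ t : ℝ, -z i ≤ t → t ≤ z j → 0 ≤ t * L + μ * t ^ 2 := by
    intro t hti htj
    set w : E k := WithLp.toLp 2 (fun l => z l + ((if l = i then t else 0) - (if l = j then t else 0)) : Fin k → ℝ)
      with hw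
    have hwl : ∀ l, w l = z l + ((if l = i then t else 0) - (if l = j then t else 0)) :=
      fun l => rfl
    have hwmem : w ∈ simplex k := by
      constructor
      · intro l
        rw [hwl l]
        by_cases h1 : l = i
        · subst h1; simp [hij]; linarith
        · by_cases h2 : l = j
          · subst h2; simp [h1]; linarith [hpos l]
          · simp [h1, h2]; exact hz.1 l
      · show ∑ l, (z l + ((if l = i then t else 0) - (if l = j then t else 0))) = 1
        rw [Finset.sum_add_distrib, Finset.sum_sub_distrib, hz.2,
          Finset.sum_ite_eq' Finset.univ i (fun _ => t),
          Finset.sum_ite_eq' Finset.univ j (fun _ => t)]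
        simp
    have hlin : lin c w = lin c z + t * c i - t * c j := by
      unfold lin
      have : ∀ l, c l * w l
          = c l * z l + ((if l = i then t * c l else 0) - (if l = j then t * c l else 0)) := by
        intro l
        rw [hwl l]
        by_cases h1 : l = i
        · subst h1; simp [hij]; ring
        · by_cases h2 : l = j
          · subst h2; simp [h1]; ring
          · simp [h1, h2]
      rw [Finset.sum_congr rfl fun l _ => this l, Finset.sum_add_distrib,
        Finset.sum_sub_distrib,
        Finset.sum_ite_eq' Finset.univ i (fun l => t * c l),
        Finset.sum_ite_eq' Finset.univ j (fun l => t * c l)]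
      simp
      ring
    have hsq : ∑ l, w l ^ 2
        = (∑ l, z l ^ 2) + (2 * t * z i + t ^ 2) - (2 * t * z j - t ^ 2) := by
      have : ∀ l, w l ^ 2 = z l ^ 2 + ((if l = i then 2 * t * z l + t ^ 2 else 0)
          - (if l = j then 2 * t * z l - t ^ 2 else 0)) := by
        intro l
        rw [hwl l]
        by_cases h1 : l = i
        · subst h1; simp [hij]; ring
        · by_cases h2 : l = j
          · subst h2; simp [h1]; ring
          · simp [h1, h2]
      rw [Finset.sum_congr rfl fun l _ => this l, Finset.sum_add_distrib,
        Finset.sum_sub_distrib,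
        Finset.sum_ite_eq' Finset.univ i (fun l => 2 * t * z l + t ^ 2),
        Finset.sum_ite_eq' Finset.univ j (fun l => 2 * t * z l - t ^ 2)]
      simp
      ring
    have h := hmin w hwmem
    rw [hlin, hsq] at h
    rw [hL]
    nlinarith [h]
  rcases lt_trichotomy L 0 with h | h | h
  · exfalso
    set t := min (z j) (-L / (2 * μ)) with htdef
    have ht0 : 0 < t := lt_min (hpos j) (div_pos (by linarith) (by linarith))
    have h1 := key t (by linarith [hpos i]) (min_le_left _ _)
    have h2 : t ≤ -L / (2 * μ) := min_le_right _ _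
    rw [le_div_iff₀ (by linarith : (0:ℝ) < 2 * μ)] at h2
    nlinarith [h1, h2, ht0, mul_pos ht0 ht0]
  · linarith [sub_eq_zero.mp h]
  · exfalso
    set s := min (z i) (L / (2 * μ)) with hsdef
    have hs0 : 0 < s := lt_min (hpos i) (by positivity)
    have h1 := key (-s) (neg_le_neg (min_le_left _ _)) (by linarith [hpos j])
    have h2 : s ≤ L / (2 * μ) := min_le_right _ _
    rw [le_div_iff₀ (by linarith : (0:ℝ) < 2 * μ)] at h2
    nlinarith [h1, h2, hs0, mul_pos hs0 hs0]

end Helpers3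

/-- In a zero-sum normal-form game with a unique interior Nash equilibrium
`(xs, ys)` that is not the uniform profile, for any `μ > 0` avoiding the two exceptional
values, the unique saddle point `(xμ, yμ)` of the symmetrically perturbed game differs from
the original equilibrium in the corresponding component. -/
theorem symmetric_perturbation_never_exact
    {m n : ℕ} (hm : 0 < m) (hn : 0 < n)
    (A : Matrix (Fin m) (Fin n) ℝ)
    (xs : E m) (ys : E n) (μ : ℝ) (xμ : E m) (yμ : E n)
    -- (xs, ys) is a Nash equilibrium of the original game
    (hxs : xs ∈ simplex m) (hys : ys ∈ simplex n)
    (hNash₁ : ∀ x ∈ simplex m, pay A xs ys ≤ pay A x ys)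
    (hNash₂ : ∀ y ∈ simplex n, pay A xs y ≤ pay A xs ys)
    -- it is the unique Nash equilibrium
    (huniq : ∀ x' ∈ simplex m, ∀ y' ∈ simplex n,
      (∀ x ∈ simplex m, pay A x' y' ≤ pay A x y') →
      (∀ y ∈ simplex n, pay A x' y ≤ pay A x' y') →
      x' = xs ∧ y' = ys)
    -- the equilibrium is interior
    (hint₁ : ∀ i, 0 < xs i) (hint₂ : ∀ j, 0 < ys j)
    -- the equilibrium is not the uniform random profile
    (hne : ¬(xs = unif m ∧ ys = unif n))
    (hμ : 0 < μ)
    -- (xμ, yμ) is the (unique) saddle point of the symmetrically perturbed game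
    (hxμ : xμ ∈ simplex m) (hyμ : yμ ∈ simplex n)
    (hsaddle₁ : ∀ y ∈ simplex n,
      pay A xμ y + μ / 2 * ‖xμ‖ ^ 2 - μ / 2 * ‖y‖ ^ 2 ≤
        pay A xμ yμ + μ / 2 * ‖xμ‖ ^ 2 - μ / 2 * ‖yμ‖ ^ 2)
    (hsaddle₂ : ∀ x ∈ simplex m,
      pay A xμ yμ + μ / 2 * ‖xμ‖ ^ 2 - μ / 2 * ‖yμ‖ ^ 2 ≤
        pay A x yμ + μ / 2 * ‖x‖ ^ 2 - μ / 2 * ‖yμ‖ ^ 2) :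
    (μ ≠ (pay A (unif m) (unif n) - pay A xs ys) / (‖xs‖ ^ 2 - 1 / m) → xμ ≠ xs) ∧
    (μ ≠ (pay A xs ys - pay A (unif m) (unif n)) / (‖ys‖ ^ 2 - 1 / n) → yμ ≠ ys) := by
  -- payoff is constant in y at xs, and constant in x at ys
  have hconstY : ∀ y ∈ simplex n, pay A xs y = pay A xs ys := by
    intro y hy
    have h := lin_const_of_max hn hys hint₂ (c := fun j => ∑ i, xs i * A i j)
      (fun w hw => by rw [← pay_right, ← pay_right]; exact hNash₂ w hw) y hy
    rwa [← pay_right, ← pay_right] at h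
  have hconstX : ∀ x ∈ simplex m, pay A x ys = pay A xs ys := by
    intro x hx
    have h := lin_const_of_min hm hxs hint₁ (c := fun i => A.mulVec ys i)
      (fun w hw => by rw [← pay_left, ← pay_left]; exact hNash₁ w hw) x hx
    rwa [← pay_left, ← pay_left] at h
  constructor
  · -- first component
    intro hμne hxeq
    rw [hxeq] at hsaddle₁ hsaddle₂
    -- yμ is the uniform distribution
    have hyu : yμ = unif n := by
      apply eq_unif_of_sumsq_le hn hyμ
      have h1 := hsaddle₁ (unif n) (unif_mem hn)
      rw [hconstY (unif n) (unif_mem hn), hconstY yμ hyμ, normsq (unif n), normsq yμ,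
        unif_sumsq hn] at h1
      nlinarith [h1, hμ]
    rw [hyu] at hsaddle₂
    -- first-order condition from the minimization in x
    have hfoc : ∀ i j, A.mulVec (unif n) i + μ * xs i = A.mulVec (unif n) j + μ * xs j := by
      apply foc hm hμ hxs hint₁ (c := fun i => A.mulVec (unif n) i)
      intro w hw
      have h2 := hsaddle₂ w hw
      rw [normsq xs, normsq w, pay_left A xs (unif n), pay_left A w (unif n)] at h2
      linarith
    -- the two multiplier identities
    have h1 := lin_of_const hm (f := fun i => A.mulVec (unif n) i + μ * xs i) hfoc hxs
    have h2 := lin_of_const hm (f := fun i => A.mulVec (unif n) i + μ * xs i) hfoc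
      (unif_mem hm)
    rw [lin_split, lin_self] at h1
    rw [lin_split, lin_unif_right hxs] at h2
    have e2 : pay A xs ys + μ * ∑ i, xs i ^ 2
        = pay A (unif m) (unif n) + μ * (1 / m) := by
      rw [← hconstY (unif n) (unif_mem hn), pay_left A xs (unif n),
        pay_left A (unif m) (unif n)]
      have h1' : lin (fun i => A.mulVec (unif n) i) xs + μ * ∑ i, xs i ^ 2
          = A.mulVec (unif n) ⟨0, hm⟩ + μ * xs ⟨0, hm⟩ := h1
      have h2' : lin (fun i => A.mulVec (unif n) i) (unif m) + μ * (1 / m)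
          = A.mulVec (unif n) ⟨0, hm⟩ + μ * xs ⟨0, hm⟩ := h2
      linarith
    by_cases hS : ∑ i, xs i ^ 2 = 1 / m
    · -- degenerate case: xs is uniform, and then ys must be uniform too, contradiction
      have hxsu : xs = unif m := eq_unif_of_sumsq_le hm hxs (le_of_eq hS)
      have hcc : ∀ i j : Fin m,
          (fun i => A.mulVec (unif n) i) i = (fun i => A.mulVec (unif n) i) j := by
        intro i j
        have h := hfoc i j
        rw [hxsu] at h
        simpa [unif] using h
      have hcconst : ∀ x ∈ simplex m, pay A x (unif n) = pay A xs (unif n) := by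
        intro x hx
        rw [pay_left, pay_left, lin_of_const hm hcc hx, lin_of_const hm hcc hxs]
      have hNash := huniq xs hxs (unif n) (unif_mem hn)
        (fun x hx => le_of_eq (hcconst x hx).symm)
        (fun y hy => by
          rw [hconstY y hy, hconstY (unif n) (unif_mem hn)])
      exact hne ⟨hxsu, hNash.2.symm⟩
    · -- nondegenerate case: μ equals the excluded value
      apply hμne
      rw [normsq xs, eq_div_iff (sub_ne_zero.mpr hS)]
      linear_combination e2
  · -- second component
    intro hμne hyeq
    rw [hyeq] at hsaddle₁ hsaddle₂
    -- xμ is the uniform distribution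
    have hxu : xμ = unif m := by
      apply eq_unif_of_sumsq_le hm hxμ
      have h1 := hsaddle₂ (unif m) (unif_mem hm)
      rw [hconstX (unif m) (unif_mem hm), hconstX xμ hxμ, normsq (unif m), normsq xμ,
        unif_sumsq hm] at h1
      nlinarith [h1, hμ]
    rw [hxu] at hsaddle₁
    -- first-order condition from the maximization in y
    have hfoc : ∀ i j : Fin n,
        -(∑ l, unif m l * A l i) + μ * ys i = -(∑ l, unif m l * A l j) + μ * ys j := by
      apply foc hn hμ hys hint₂ (c := fun j => -(∑ l, unif m l * A l j))
      intro w hw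
      have h2 := hsaddle₁ w hw
      rw [normsq ys, normsq w, pay_right A (unif m) ys, pay_right A (unif m) w] at h2
      rw [show (fun j => -(∑ l, unif m l * A l j)) = (fun j => -((fun j => ∑ l, unif m l * A l j) j)) from rfl,
        lin_neg, lin_neg]
      linarith
    have h1 := lin_of_const hn
      (f := fun j => -(∑ l, unif m l * A l j) + μ * ys j) hfoc hys
    have h2 := lin_of_const hn
      (f := fun j => -(∑ l, unif m l * A l j) + μ * ys j) hfoc (unif_mem hn)
    rw [lin_split, lin_self] at h1
    rw [lin_split, lin_unif_right hys] at h2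
    rw [show (fun j => -(∑ l, unif m l * A l j)) = (fun j => -((fun j => ∑ l, unif m l * A l j) j)) from rfl,
      lin_neg] at h1 h2
    have e2 : -pay A (unif m) ys + μ * ∑ j, ys j ^ 2
        = -pay A (unif m) (unif n) + μ * (1 / n) := by
      rw [pay_right A (unif m) ys, pay_right A (unif m) (unif n)]
      have h1' : -lin (fun j => ∑ i, unif m i * A i j) ys + μ * ∑ j, ys j ^ 2
          = -(∑ l, unif m l * A l (⟨0, hn⟩ : Fin n)) + μ * ys ⟨0, hn⟩ := h1
      have h2' : -lin (fun j => ∑ i, unif m i * A i j) (unif n) + μ * (1 / n)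
          = -(∑ l, unif m l * A l (⟨0, hn⟩ : Fin n)) + μ * ys ⟨0, hn⟩ := h2
      linarith
    rw [hconstX (unif m) (unif_mem hm)] at e2
    by_cases hS : ∑ j, ys j ^ 2 = 1 / n
    · have hysu : ys = unif n := eq_unif_of_sumsq_le hn hys (le_of_eq hS)
      have hcc : ∀ i j : Fin n,
          (fun j => ∑ l, unif m l * A l j) i = (fun j => ∑ l, unif m l * A l j) j := by
        intro i j
        have h := hfoc i j
        rw [hysu] at h
        have h' : -(∑ l, unif m l * A l i) = -(∑ l, unif m l * A l j) := by
          simpa [unif] using h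
        simpa using h'
      have hcconst : ∀ y ∈ simplex n, pay A (unif m) y = pay A (unif m) ys := by
        intro y hy
        rw [pay_right, pay_right, lin_of_const hn hcc hy, lin_of_const hn hcc hys]
      have hNash := huniq (unif m) (unif_mem hm) ys hys
        (fun x hx => by rw [hconstX x hx, hconstX (unif m) (unif_mem hm)])
        (fun y hy => le_of_eq (hcconst y hy))
      exact hne ⟨hNash.1.symm, hysu⟩
    · apply hμne
      rw [normsq ys, eq_div_iff (sub_ne_zero.mpr hS)]
      linear_combination e2
end
end

section
/- Consider a zero-sum normal-form game with payoff matrix A ∈ ℝ^{n×n} satisfying Aᵀ = −A, that has a unique Nash equilibrium (x*, y*) lying in the interior of Δ^n × Δ^n, and assume (x*, y*) ≠ ((1/n)·1_n, (1/n)·1_n). Then for every μ > 0, the unique saddle point (x^μ, y^μ) of the symmetrically perturbed game satisfies x^μ ≠ x* and y^μ ≠ y*. -/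
open scoped RealInnerProductSpace Classical

noncomputable section

lemma pay_sum {n : ℕ} (A : Matrix (Fin n) (Fin n) ℝ) (x y : E n) :
    pay A x y = ∑ j, (∑ i, A i j * x i) * y j := by
  unfold pay toE Matrix.mulVec
  simp only [PiLp.inner_apply, RCLike.inner_apply, starRingEnd_apply, star_trivial,
    WithLp.equiv_symm_apply, PiLp.toLp_apply, dotProduct, Finset.mul_sum, Finset.sum_mul]
  rw [Finset.sum_comm]
  exact Finset.sum_congr rfl fun j _ => Finset.sum_congr rfl fun i _ => by ring

lemma pay_antisymm {n : ℕ} {A : Matrix (Fin n) (Fin n) ℝ} (hA : A.transpose = -A)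
    (x y : E n) : pay A x y = - pay A y x := by
  have hA' : ∀ i j, A i j = - A j i := by
    intro i j
    have := congrFun (congrFun hA j) i
    simpa [Matrix.transpose_apply] using this
  rw [pay_sum, pay_sum]
  simp only [Finset.sum_mul, ← Finset.sum_neg_distrib]
  rw [Finset.sum_comm]
  exact Finset.sum_congr rfl fun i _ => Finset.sum_congr rfl fun j _ => by
    rw [hA' j i]; ring

lemma pay_self {n : ℕ} {A : Matrix (Fin n) (Fin n) ℝ} (hA : A.transpose = -A)
    (x : E n) : pay A x x = 0 := by
  have := pay_antisymm hA x x; linarith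

lemma unif_mem_s1 {n : ℕ} (hn : 0 < n) : unif n ∈ simplex n := by
  constructor
  · intro i; simp [unif, PiLp.toLp_apply]
  · simp only [unif, PiLp.toLp_apply, Finset.sum_const, Finset.card_univ, Fintype.card_fin, nsmul_eq_mul]
    field_simp

lemma norm_strict {n : ℕ} (z : E n) (hz : z ∈ simplex n) (h : z ≠ unif n) :
    ‖unif n‖ ^ 2 < ‖z‖ ^ 2 := by
  have hinner : ⟪unif n, z - unif n⟫ = 0 := by
    simp only [PiLp.inner_apply, RCLike.inner_apply, starRingEnd_apply, star_trivial,
      PiLp.sub_apply]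
    simp only [unif, PiLp.toLp_apply]
    rw [← Finset.sum_mul, Finset.sum_sub_distrib, hz.2]
    simp only [Finset.sum_const, Finset.card_univ, Fintype.card_fin, nsmul_eq_mul]
    rcases Nat.eq_zero_or_pos n with h0 | h0
    · subst h0; simp
    · field_simp; ring
  have h1 : ‖z‖ ^ 2 = ‖unif n‖ ^ 2 + 2 * ⟪unif n, z - unif n⟫ + ‖z - unif n‖ ^ 2 := by
    have := norm_add_sq_real (unif n) (z - unif n)
    simpa using this
  have h2 : 0 < ‖z - unif n‖ ^ 2 := by
    have h3 : 0 < ‖z - unif n‖ := norm_pos_iff.mpr (sub_ne_zero.mpr h)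
    positivity
  rw [h1, hinner]; linarith

/-- If moreover `Aᵀ = -A`, the saddle point of the symmetrically perturbed
game never coincides with the unique interior non-uniform equilibrium, for any `μ > 0`. -/
theorem symmetric_perturbation_never_exact_antisymmetric
    {n : ℕ} (hn : 0 < n)
    (A : Matrix (Fin n) (Fin n) ℝ) (hA : A.transpose = -A)
    (xs : E n) (ys : E n) (μ : ℝ) (xμ : E n) (yμ : E n)
    -- (xs, ys) is a Nash equilibrium of the original game
    (hxs : xs ∈ simplex n) (hys : ys ∈ simplex n)
    (hNash₁ : ∀ x ∈ simplex n, pay A xs ys ≤ pay A x ys)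
    (hNash₂ : ∀ y ∈ simplex n, pay A xs y ≤ pay A xs ys)
    -- it is the unique Nash equilibrium
    (huniq : ∀ x' ∈ simplex n, ∀ y' ∈ simplex n,
      (∀ x ∈ simplex n, pay A x' y' ≤ pay A x y') →
      (∀ y ∈ simplex n, pay A x' y ≤ pay A x' y') →
      x' = xs ∧ y' = ys)
    -- the equilibrium is interior
    (hint₁ : ∀ i, 0 < xs i) (hint₂ : ∀ j, 0 < ys j)
    -- the equilibrium is not the uniform random profile
    (hne : ¬(xs = unif n ∧ ys = unif n))
    (hμ : 0 < μ)
    -- (xμ, yμ) is the (unique) saddle point of the symmetrically perturbed game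
    (hxμ : xμ ∈ simplex n) (hyμ : yμ ∈ simplex n)
    (hsaddle₁ : ∀ y ∈ simplex n,
      pay A xμ y + μ / 2 * ‖xμ‖ ^ 2 - μ / 2 * ‖y‖ ^ 2 ≤
        pay A xμ yμ + μ / 2 * ‖xμ‖ ^ 2 - μ / 2 * ‖yμ‖ ^ 2)
    (hsaddle₂ : ∀ x ∈ simplex n,
      pay A xμ yμ + μ / 2 * ‖xμ‖ ^ 2 - μ / 2 * ‖yμ‖ ^ 2 ≤
        pay A x yμ + μ / 2 * ‖x‖ ^ 2 - μ / 2 * ‖yμ‖ ^ 2) :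
    xμ ≠ xs ∧ yμ ≠ ys := by
  --
  -- Step 1: by antisymmetry and uniqueness, xs = ys
  have hxy : xs = ys := by
    have hswap₁ : ∀ x ∈ simplex n, pay A ys xs ≤ pay A x xs := by
      intro x hx
      have h := hNash₂ x hx
      rw [pay_antisymm hA ys xs, pay_antisymm hA x xs]; linarith
    have hswap₂ : ∀ y ∈ simplex n, pay A ys y ≤ pay A ys xs := by
      intro y hy
      have h := hNash₁ y hy
      rw [pay_antisymm hA ys y, pay_antisymm hA ys xs]; linarith
    exact (huniq ys hys xs hxs hswap₁ hswap₂).2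
  -- Step 2: the vector c = Aᵀ xs is constant
  let c : Fin n → ℝ := fun j => ∑ i, A i j * xs i
  have hps : ∀ y : E n, pay A xs y = ∑ j, c j * y j := fun y => pay_sum A xs y
  have hcle : ∀ j k : Fin n, c j ≤ c k := by
    intro j k
    by_cases hjk : j = k
    · exact hjk ▸ le_refl _
    · set y' : E n := WithLp.toLp 2 (fun i =>
        ys i + ys k * ((if i = j then (1:ℝ) else 0) - (if i = k then 1 else 0))) with hy'
      have hy'mem : y' ∈ simplex n := by
        constructor
        · intro i
          show (0:ℝ) ≤ ys i + ys k * ((if i = j then (1:ℝ) else 0) - if i = k then 1 else 0)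
          rcases eq_or_ne i j with rfl | hij
          · rw [if_pos rfl, if_neg hjk]
            nlinarith [hint₂ i, hint₂ k]
          · rw [if_neg hij]
            rcases eq_or_ne i k with rfl | hik
            · rw [if_pos rfl]
              linarith [hint₂ i]
            · rw [if_neg hik]
              linarith [hint₂ i]
        · simp only [hy', PiLp.toLp_apply]
          rw [Finset.sum_add_distrib, hys.2, ← Finset.mul_sum, Finset.sum_sub_distrib]
          simp [Finset.sum_ite_eq']
      have h := hNash₂ y' hy'mem
      rw [hps y', hps ys] at h
      have hexp : (∑ m, c m * y' m) = (∑ m, c m * ys m) + ys k * (c j - c k) := by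
        simp only [hy', PiLp.toLp_apply, mul_add, Finset.sum_add_distrib]
        congr 1
        calc ∑ m, c m * (ys k * ((if m = j then (1:ℝ) else 0) - if m = k then 1 else 0))
            = ∑ m, ((if m = j then c m * ys k else 0) - (if m = k then c m * ys k else 0)) := by
              refine Finset.sum_congr rfl fun m _ => ?_
              split_ifs <;> ring
          _ = c j * ys k - c k * ys k := by
              rw [Finset.sum_sub_distrib,
                Finset.sum_ite_eq' Finset.univ j (fun m => c m * ys k),
                Finset.sum_ite_eq' Finset.univ k (fun m => c m * ys k)]
              simp
          _ = ys k * (c j - c k) := by ring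
      rw [hexp] at h
      nlinarith [hint₂ k]
  have hceq : ∀ j k, c j = c k := fun j k => le_antisymm (hcle j k) (hcle k j)
  -- Step 3: c = 0
  have hpay0 : pay A xs ys = 0 := by rw [← hxy]; exact pay_self hA xs
  have hsum0 : ∑ j, c j * ys j = 0 := by rw [← hps]; exact hpay0
  have hall : ∀ j, c j = 0 := by
    intro j
    have h1 : ∑ m, c m * ys m = c j * ∑ m, ys m := by
      rw [Finset.mul_sum]
      exact Finset.sum_congr rfl fun m _ => by rw [hceq m j]
    rw [hys.2, mul_one] at h1
    linarith [hsum0, h1.symm.trans hsum0]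
  have hpayxs : ∀ y : E n, pay A xs y = 0 := by
    intro y; rw [hps]; simp [hall]
  have hpayx_xs : ∀ x : E n, pay A x xs = 0 := by
    intro x; rw [pay_antisymm hA x xs, hpayxs x]; ring
  have hxsu : xs ≠ unif n := fun h => hne ⟨h, by rw [← hxy]; exact h⟩
  have hysu : ys ≠ unif n := fun h => hne ⟨by rw [hxy]; exact h, h⟩
  constructor
  · intro h
    subst h
    have hs1 := hsaddle₁ (unif n) (unif_mem_s1 hn)
    have hs2 := hsaddle₂ yμ hyμ
    simp only [hpayxs, pay_self hA] at hs1 hs2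
    have h3 := norm_strict xμ hxs hxsu
    nlinarith
  · intro h
    subst h
    have hys0 : ∀ x : E n, pay A x yμ = 0 := fun x => by rw [← hxy]; exact hpayx_xs x
    have hs1 := hsaddle₁ xμ hxμ
    have hs2 := hsaddle₂ (unif n) (unif_mem_s1 hn)
    simp only [hys0, pay_self hA] at hs1 hs2
    have h3 := norm_strict yμ hys hysu
    nlinarith
end
end

section
/- Suppose α > 0 satisfies max_{y∈Y} xᵀAy − v* ≥ α‖x − Π_{X*}(x)‖ for all x ∈ X. If the perturbation strength μ satisfies 0 < μ < α / max_{x*∈X*}‖x*‖, then the unique minimizer x^μ of the function x ↦ max_{y∈Y} xᵀAy + (μ/2)‖x‖² over X belongs to X*. -/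
open scoped RealInnerProductSpace Classical

noncomputable section

section aux
variable {m n : ℕ} (A : Matrix (Fin m) (Fin n) ℝ) {Y : Set (E n)}

lemma polytope_compact {k : ℕ} {S : Set (E k)} (h : isPolytope S) :
    IsCompact S ∧ S.Nonempty := by
  obtain ⟨s, hsne, rfl⟩ := h
  refine ⟨(s.finite_toSet).isCompact_convexHull (𝕜 := ℝ), ?_⟩
  rw [convexHull_nonempty_iff]
  exact ⟨hsne.choose, hsne.choose_spec⟩

lemma pay_eq (x : E m) (y : E n) :
    pay A x y = ⟪x, (Matrix.toEuclideanLin A).toContinuousLinearMap y⟫ := rfl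

lemma pay_cont (x : E m) : Continuous (pay A x) := by
  have : pay A x = fun y => ⟪x, (Matrix.toEuclideanLin A).toContinuousLinearMap y⟫ := rfl
  rw [this]
  exact (continuous_const.inner ((Matrix.toEuclideanLin A).toContinuousLinearMap).continuous)

lemma pay_le_gmax (hYc : IsCompact Y) (x : E m) {y : E n} (hy : y ∈ Y) :
    pay A x y ≤ gmax A Y x :=
  le_csSup ((hYc.image (pay_cont A x)).bddAbove) (Set.mem_image_of_mem _ hy)

lemma gmax_le (hYne : Y.Nonempty) (x : E m) {b : ℝ} (h : ∀ y ∈ Y, pay A x y ≤ b) :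
    gmax A Y x ≤ b :=
  csSup_le (hYne.image _) (by rintro r ⟨y, hy, rfl⟩; exact h y hy)

lemma gmax_lipschitz_bound (hYc : IsCompact Y) (hYne : Y.Nonempty) :
    ∃ C : ℝ, 0 ≤ C ∧ ∀ x₁ x₂ : E m, gmax A Y x₁ ≤ gmax A Y x₂ + C * ‖x₁ - x₂‖ := by
  obtain ⟨C, hC⟩ := hYc.exists_bound_of_continuousOn
    ((Matrix.toEuclideanLin A).toContinuousLinearMap).continuous.continuousOn
  refine ⟨max C 0, le_max_right _ _, fun x₁ x₂ => ?_⟩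
  refine gmax_le A hYne _ (fun y hy => ?_)
  have h1 : pay A x₁ y = pay A x₂ y + ⟪x₁ - x₂, (Matrix.toEuclideanLin A).toContinuousLinearMap y⟫ := by
    simp only [pay_eq]; rw [inner_sub_left]; ring
  have h2 : ⟪x₁ - x₂, (Matrix.toEuclideanLin A).toContinuousLinearMap y⟫ ≤
      ‖x₁ - x₂‖ * ‖(Matrix.toEuclideanLin A).toContinuousLinearMap y‖ := real_inner_le_norm _ _
  have h3 : ‖(Matrix.toEuclideanLin A).toContinuousLinearMap y‖ ≤ max C 0 :=
    le_trans (hC y hy) (le_max_left _ _)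
  have h4 : pay A x₂ y ≤ gmax A Y x₂ := pay_le_gmax A hYc x₂ hy
  have h5 : ‖x₁ - x₂‖ * ‖(Matrix.toEuclideanLin A).toContinuousLinearMap y‖ ≤
      ‖x₁ - x₂‖ * max C 0 := mul_le_mul_of_nonneg_left h3 (norm_nonneg _)
  nlinarith

lemma gmax_continuous (hYc : IsCompact Y) (hYne : Y.Nonempty) :
    Continuous (gmax A Y) := by
  obtain ⟨C, hC0, hC⟩ := gmax_lipschitz_bound A hYc hYne
  refine (LipschitzWith.of_dist_le_mul (K := C.toNNReal) (f := gmax A Y) (fun x₁ x₂ => ?_)).continuous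
  rw [Real.dist_eq, abs_le, Real.coe_toNNReal C hC0]
  constructor
  · have := hC x₂ x₁
    rw [dist_eq_norm]
    have : ‖x₂ - x₁‖ = ‖x₁ - x₂‖ := norm_sub_rev _ _
    have h := hC x₂ x₁
    rw [norm_sub_rev x₂ x₁] at h
    linarith
  · have h := hC x₁ x₂
    rw [dist_eq_norm]
    linarith
end aux


/-- Under the error-bound condition with constant `α > 0`, if
`0 < μ < α / max_{x* ∈ X*} ‖x*‖`, then the unique minimizer of the asymmetrically perturbed
objective `x ↦ max_{y ∈ Y} xᵀAy + (μ/2)‖x‖²` over `X` is a minimax strategy of the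
original game. -/
theorem asymmetric_perturbation_equilibrium_invariance
    {m n : ℕ} (A : Matrix (Fin m) (Fin n) ℝ) (X : Set (E m)) (Y : Set (E n))
    (hX : isPolytope X) (hY : isPolytope Y)
    (α μ : ℝ) (hα : 0 < α)
    (hsub : ∀ x ∈ X, gmax A Y x - vStar A X Y ≥ α * ‖x - projOn (minimaxSet A X Y) x‖)
    (hμ0 : 0 < μ)
    (hμ : μ < α / sSup ((fun x => ‖x‖) '' minimaxSet A X Y))
    (xμ : E m) (hxμ : xμ ∈ X)
    (hxμmin : ∀ x ∈ X,
      gmax A Y xμ + μ / 2 * ‖xμ‖ ^ 2 ≤ gmax A Y x + μ / 2 * ‖x‖ ^ 2) :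
    xμ ∈ minimaxSet A X Y := by
  obtain ⟨hXc, hXne⟩ := polytope_compact hX
  obtain ⟨hYc, hYne⟩ := polytope_compact hY
  have hgc : Continuous (gmax A Y) := gmax_continuous A hYc hYne
  -- minimizer of gmax over X
  obtain ⟨x₀, hx₀X, hx₀'⟩ := hXc.exists_isMinOn hXne hgc.continuousOn
  have hx₀ : ∀ x' ∈ X, gmax A Y x₀ ≤ gmax A Y x' := fun x' hx' => hx₀' hx'
  set S := minimaxSet A X Y with hS
  have hx₀S : x₀ ∈ S := ⟨hx₀X, hx₀⟩
  -- S compact nonempty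
  have hSeq : S = X ∩ (gmax A Y) ⁻¹' (Set.Iic (gmax A Y x₀)) := by
    ext x
    constructor
    · rintro ⟨hxX, hx⟩; exact ⟨hxX, hx x₀ hx₀X⟩
    · rintro ⟨hxX, hx⟩
      exact ⟨hxX, fun x' hx' => le_trans hx (hx₀ x' hx')⟩
  have hSc : IsCompact S := by
    rw [hSeq]; exact hXc.inter_right (isClosed_Iic.preimage hgc)
  have hSne : S.Nonempty := ⟨x₀, hx₀S⟩
  -- the projection exists
  have hproj : ∃ p ∈ S, ∀ q ∈ S, ‖xμ - p‖ ≤ ‖xμ - q‖ := by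
    obtain ⟨p, hpS, hp⟩ := hSc.exists_isMinOn hSne
      (Continuous.continuousOn (by continuity : Continuous fun q : E m => ‖xμ - q‖))
    exact ⟨p, hpS, fun q hq => hp hq⟩
  set p := projOn S xμ with hpdef
  have hpS : p ∈ S := by
    rw [hpdef, projOn, dif_pos hproj]
    exact hproj.choose_spec.1
  -- vStar = gmax p
  have hv : vStar A X Y = gmax A Y p := by
    apply le_antisymm
    · exact csInf_le ⟨gmax A Y p, by rintro r ⟨x, hxX, rfl⟩; exact hpS.2 x hxX⟩
        (Set.mem_image_of_mem _ hpS.1)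
    · exact le_csInf (hXne.image _) (by rintro r ⟨x, hxX, rfl⟩; exact hpS.2 x hxX)
  -- sSup of norms
  set s := sSup ((fun x => ‖x‖) '' S) with hsdef
  have hsbdd : BddAbove ((fun x : E m => ‖x‖) '' S) := (hSc.image continuous_norm).bddAbove
  have hps : ‖p‖ ≤ s := le_csSup hsbdd (Set.mem_image_of_mem _ hpS)
  have hs0 : 0 < s := by
    by_contra h
    push_neg at h
    have : α / s ≤ 0 := div_nonpos_of_nonneg_of_nonpos hα.le h
    linarith
  have hμs : μ * s < α := by
    rw [lt_div_iff₀ hs0] at hμ; exact hμ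
  -- key inequalities
  have h1 : α * ‖xμ - p‖ ≤ gmax A Y xμ - vStar A X Y := hsub xμ hxμ
  have h2 : gmax A Y xμ + μ / 2 * ‖xμ‖ ^ 2 ≤ gmax A Y p + μ / 2 * ‖p‖ ^ 2 :=
    hxμmin p hpS.1
  have h3 : ‖p‖ - ‖xμ‖ ≤ ‖p - xμ‖ := by
    have := norm_sub_norm_le p xμ; linarith
  have h4 : ‖p - xμ‖ = ‖xμ - p‖ := norm_sub_rev _ _
  have hd0 : 0 ≤ ‖xμ - p‖ := norm_nonneg _
  have hp0 : 0 ≤ ‖p‖ := norm_nonneg _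
  have hx0 : 0 ≤ ‖xμ‖ := norm_nonneg _
  -- ‖p‖² - ‖xμ‖² ≤ 2‖p‖‖xμ - p‖
  have h5 : ‖p‖ ^ 2 - ‖xμ‖ ^ 2 ≤ 2 * ‖p‖ * ‖xμ - p‖ := by
    rcases le_or_gt ‖p‖ ‖xμ‖ with h | h
    · nlinarith
    · nlinarith
  have hd : ‖xμ - p‖ = 0 := by
    by_contra hne
    have hdpos : 0 < ‖xμ - p‖ := lt_of_le_of_ne hd0 (Ne.symm hne)
    have : α * ‖xμ - p‖ ≤ μ * s * ‖xμ - p‖ := by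
      have hps2 : μ * ‖p‖ * ‖xμ - p‖ ≤ μ * s * ‖xμ - p‖ :=
        mul_le_mul_of_nonneg_right (mul_le_mul_of_nonneg_left hps hμ0.le) hd0
      nlinarith [h1, h2, h5, hv]
    nlinarith
  have : xμ = p := by
    have := norm_sub_eq_zero_iff.mp hd; exact this
  rw [this]; exact hpS
end
end

section
/- There exists a positive constant α > 0, depending only on the set X* of minimax strategies, such that for every x ∈ X: max_{y∈Y} xᵀAy − v* ≥ α‖x − Π_{X*}(x)‖. -/
open scoped RealInnerProductSpace Classical

noncomputable section

namespace MSRAux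

variable {d : ℕ}

/-- The point on the segment `[v, w]` where `⟪·, c⟫` equals `r`. -/
def crossPt (c : E d) (r : ℝ) (v w : E d) : E d :=
  v + ((r - ⟪v, c⟫) / (⟪w, c⟫ - ⟪v, c⟫)) • (w - v)

/-- Generators for the intersection of `convexHull s` with the halfspace `⟪·, c⟫ ≤ r`. -/
def cutSet (c : E d) (r : ℝ) (s : Finset (E d)) : Finset (E d) :=
  s.filter (fun v => ⟪v, c⟫ ≤ r) ∪
    ((s ×ˢ s).filter (fun p => ⟪p.1, c⟫ ≤ r ∧ r < ⟪p.2, c⟫)).image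
      (fun p => crossPt c r p.1 p.2)

lemma crossPt_combo (c : E d) (r : ℝ) (v w : E d) :
    crossPt c r v w = (1 - (r - ⟪v, c⟫) / (⟪w, c⟫ - ⟪v, c⟫)) • v
      + ((r - ⟪v, c⟫) / (⟪w, c⟫ - ⟪v, c⟫)) • w := by
  rw [crossPt]; module

lemma inner_crossPt {c : E d} {r : ℝ} {v w : E d} (hv : ⟪v, c⟫ ≤ r) (hw : r < ⟪w, c⟫) :
    ⟪crossPt c r v w, c⟫ = r := by
  have hd : ⟪w, c⟫ - ⟪v, c⟫ ≠ 0 := by have : ⟪v, c⟫ < ⟪w, c⟫ := lt_of_le_of_lt hv hw; linarith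
  have h1 : ⟪crossPt c r v w, c⟫
      = ⟪v, c⟫ + (r - ⟪v, c⟫) / (⟪w, c⟫ - ⟪v, c⟫) * (⟪w, c⟫ - ⟪v, c⟫) := by
    rw [crossPt, inner_add_left, real_inner_smul_left, inner_sub_left]
  rw [h1, div_mul_cancel₀ _ hd]; ring

lemma cutSet_mono {s s' : Finset (E d)} (h : s ⊆ s') (c : E d) (r : ℝ) :
    cutSet c r s ⊆ cutSet c r s' :=
  Finset.union_subset_union (Finset.filter_subset_filter _ h)
    (Finset.image_subset_image (Finset.filter_subset_filter _ (Finset.product_subset_product h h)))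

lemma cutSet_subset (c : E d) (r : ℝ) (s : Finset (E d)) :
    (cutSet c r s : Set (E d)) ⊆ convexHull ℝ (s : Set (E d)) ∩ {x | ⟪x, c⟫ ≤ r} := by
  intro x hx
  rw [Finset.mem_coe, cutSet, Finset.mem_union] at hx
  rcases hx with hx | hx
  · rw [Finset.mem_filter] at hx
    exact ⟨subset_convexHull ℝ _ (Finset.mem_coe.2 hx.1), hx.2⟩
  · rw [Finset.mem_image] at hx
    obtain ⟨p, hp, rfl⟩ := hx
    rw [Finset.mem_filter, Finset.mem_product] at hp
    obtain ⟨⟨h1, h2⟩, hv, hw⟩ := hp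
    have hlt : ⟪p.1, c⟫ < ⟪p.2, c⟫ := lt_of_le_of_lt hv hw
    have hθ0 : 0 ≤ (r - ⟪p.1, c⟫) / (⟪p.2, c⟫ - ⟪p.1, c⟫) :=
      div_nonneg (by linarith) (by linarith)
    have hθ1 : (r - ⟪p.1, c⟫) / (⟪p.2, c⟫ - ⟪p.1, c⟫) ≤ 1 :=
      (div_le_one (by linarith)).2 (by linarith)
    constructor
    · rw [crossPt_combo]
      exact (convex_convexHull ℝ (s : Set (E d)))
        (subset_convexHull ℝ _ (Finset.mem_coe.2 h1))
        (subset_convexHull ℝ _ (Finset.mem_coe.2 h2)) (by linarith) hθ0 (by ring)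
    · exact le_of_eq (inner_crossPt hv hw)

lemma subset_cut_aux (c : E d) (r : ℝ) :
    ∀ N (s : Finset (E d)), s.card ≤ N →
      ∀ x, x ∈ convexHull ℝ (s : Set (E d)) → ⟪x, c⟫ ≤ r →
        x ∈ convexHull ℝ ((cutSet c r s : Finset (E d)) : Set (E d)) := by
  intro N
  induction N with
  | zero =>
    intro s hcard x hx _
    rw [Finset.card_eq_zero.1 (Nat.le_zero.1 hcard)] at hx
    simp at hx
  | succ N ih =>
    intro s hcard x hx hxc
    have hx0 := hx
    rw [Finset.convexHull_eq] at hx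
    obtain ⟨wt, hwt0, hwt1, hwtx⟩ := hx
    have hxsum : ∑ u ∈ s, wt u • u = x := by
      rw [Finset.centerMass_eq_of_sum_1 _ id hwt1] at hwtx
      simpa using hwtx
    by_cases hzero : ∃ v ∈ s, wt v = 0
    · obtain ⟨v₀, hv₀s, hv₀⟩ := hzero
      have hsum' : ∑ u ∈ s.erase v₀, wt u = 1 := by
        rw [Finset.sum_erase _ hv₀]; exact hwt1
      have hpt' : ∑ u ∈ s.erase v₀, wt u • u = x := by
        rw [Finset.sum_erase _ (by rw [hv₀, zero_smul])]; exact hxsum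
      have hx' : x ∈ convexHull ℝ ((s.erase v₀ : Finset (E d)) : Set (E d)) := by
        rw [Finset.convexHull_eq]
        refine ⟨wt, fun y hy => hwt0 y (Finset.mem_of_mem_erase hy), hsum', ?_⟩
        rw [Finset.centerMass_eq_of_sum_1 _ id hsum']
        simpa using hpt'
      have hcard' : (s.erase v₀).card ≤ N := by
        rw [Finset.card_erase_of_mem hv₀s]; omega
      exact convexHull_mono (Finset.coe_subset.2 (cutSet_mono (Finset.erase_subset _ _) c r))
        (ih _ hcard' x hx' hxc)
    · push_neg at hzero
      have hpos : ∀ v ∈ s, 0 < wt v := fun v hv => lt_of_le_of_ne (hwt0 v hv) (Ne.symm (hzero v hv))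
      by_cases hall : ∀ v ∈ s, ⟪v, c⟫ ≤ r
      · refine convexHull_mono ?_ hx0
        intro v hv
        rw [Finset.mem_coe] at hv ⊢
        exact Finset.mem_union_left _ (Finset.mem_filter.2 ⟨hv, hall v hv⟩)
      · push_neg at hall
        obtain ⟨w₀, hw₀s, hw₀r⟩ := hall
        have hsne : s.Nonempty := ⟨w₀, hw₀s⟩
        have hvex : ∃ v ∈ s, ⟪v, c⟫ ≤ r := by
          by_contra h
          push_neg at h
          have hgt : r < ⟪x, c⟫ := by
            have h1 : ⟪x, c⟫ = ∑ u ∈ s, wt u * ⟪u, c⟫ := by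
              rw [← hxsum, sum_inner]
              simp_rw [real_inner_smul_left]
            have h2 : ∑ u ∈ s, wt u * r < ∑ u ∈ s, wt u * ⟪u, c⟫ := by
              apply Finset.sum_lt_sum_of_nonempty hsne
              intro v hv
              exact mul_lt_mul_of_pos_left (h v hv) (hpos v hv)
            rw [← Finset.sum_mul, hwt1, one_mul] at h2
            linarith [h1 ▸ h2]
          linarith
        obtain ⟨v₀, hv₀s, hv₀r⟩ := hvex
        have hlt : ⟪v₀, c⟫ < ⟪w₀, c⟫ := lt_of_le_of_lt hv₀r hw₀r
        have hne : v₀ ≠ w₀ := fun h => by rw [h] at hlt; exact lt_irrefl _ hlt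
        set θ : ℝ := (r - ⟪v₀, c⟫) / (⟪w₀, c⟫ - ⟪v₀, c⟫) with hθdef
        have hθ0 : 0 ≤ θ := div_nonneg (by linarith) (by linarith)
        have hθ1 : θ < 1 := (div_lt_one (by linarith)).2 (by linarith)
        have h1θ : (0:ℝ) < 1 - θ := by linarith
        set z : E d := crossPt c r v₀ w₀ with hzdef
        have hzmem : z ∈ cutSet c r s := by
          apply Finset.mem_union_right
          exact Finset.mem_image.2 ⟨(v₀, w₀),
            Finset.mem_filter.2 ⟨Finset.mem_product.2 ⟨hv₀s, hw₀s⟩, hv₀r, hw₀r⟩, rfl⟩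
        have hzc : ⟪z, c⟫ = r := inner_crossPt hv₀r hw₀r
        have hzcombo : z = (1 - θ) • v₀ + θ • w₀ := crossPt_combo c r v₀ w₀
        set μ : ℝ := min (wt v₀ / (1 - θ)) (if θ = 0 then 1 else wt w₀ / θ) with hμdef
        have hμpos : 0 < μ := by
          apply lt_min (div_pos (hpos v₀ hv₀s) h1θ)
          split_ifs with h
          · exact one_pos
          · exact div_pos (hpos w₀ hw₀s) (lt_of_le_of_ne hθ0 (Ne.symm h))
        have hμv : μ * (1 - θ) ≤ wt v₀ := by
          have := min_le_left (wt v₀ / (1 - θ)) (if θ = 0 then 1 else wt w₀ / θ)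
          rw [← hμdef] at this
          calc μ * (1 - θ) ≤ (wt v₀ / (1 - θ)) * (1 - θ) :=
                mul_le_mul_of_nonneg_right this h1θ.le
            _ = wt v₀ := div_mul_cancel₀ _ h1θ.ne'
        have hμw : μ * θ ≤ wt w₀ := by
          rcases eq_or_ne θ 0 with h | h
          · rw [h, mul_zero]; exact hwt0 w₀ hw₀s
          · have hθpos : 0 < θ := lt_of_le_of_ne hθ0 (Ne.symm h)
            have := min_le_right (wt v₀ / (1 - θ)) (if θ = 0 then 1 else wt w₀ / θ)
            rw [← hμdef, if_neg h] at this
            calc μ * θ ≤ (wt w₀ / θ) * θ := mul_le_mul_of_nonneg_right this hθpos.le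
              _ = wt w₀ := div_mul_cancel₀ _ hθpos.ne'
        have hpair : wt v₀ + wt w₀ ≤ 1 := by
          rw [← hwt1]
          have : ({v₀, w₀} : Finset (E d)) ⊆ s := by
            intro u hu
            rcases Finset.mem_insert.1 hu with h | h
            · rw [h]; exact hv₀s
            · rw [Finset.mem_singleton.1 h]; exact hw₀s
          calc wt v₀ + wt w₀ = ∑ u ∈ ({v₀, w₀} : Finset (E d)), wt u := by
                rw [Finset.sum_pair hne]
            _ ≤ ∑ u ∈ s, wt u :=
                Finset.sum_le_sum_of_subset_of_nonneg this (fun u hu _ => hwt0 u hu)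
        have hμ1 : μ ≤ 1 := by nlinarith
        -- the reduced weights
        set wt' : E d → ℝ := fun u =>
          wt u - (if u = v₀ then μ * (1 - θ) else 0) - (if u = w₀ then μ * θ else 0) with hwt'def
        have hne' : w₀ ≠ v₀ := Ne.symm hne
        have hwt'v₀ : wt' v₀ = wt v₀ - μ * (1 - θ) := by
          simp [hwt'def, hne]
        have hwt'w₀ : wt' w₀ = wt w₀ - μ * θ := by
          simp [hwt'def, hne']
        have hwt'other : ∀ u, u ≠ v₀ → u ≠ w₀ → wt' u = wt u := by
          intro u h h'
          simp [hwt'def, h, h']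
        have hwt'0 : ∀ u ∈ s, 0 ≤ wt' u := by
          intro u hu
          rcases eq_or_ne u v₀ with h | h
          · rw [h, hwt'v₀]; linarith
          · rcases eq_or_ne u w₀ with h' | h'
            · rw [h', hwt'w₀]; linarith
            · rw [hwt'other u h h']; exact hwt0 u hu
        have hsum_ite_v : ∑ u ∈ s, (if u = v₀ then μ * (1 - θ) else 0) = μ * (1 - θ) := by
          rw [Finset.sum_ite_eq' s v₀ (fun _ => μ * (1 - θ)), if_pos hv₀s]
        have hsum_ite_w : ∑ u ∈ s, (if u = w₀ then μ * θ else 0) = μ * θ := by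
          rw [Finset.sum_ite_eq' s w₀ (fun _ => μ * θ), if_pos hw₀s]
        have hwt'sum : ∑ u ∈ s, wt' u = 1 - μ := by
          simp only [hwt'def]
          rw [Finset.sum_sub_distrib, Finset.sum_sub_distrib, hwt1, hsum_ite_v, hsum_ite_w]
          ring
        have hwt'pt : ∑ u ∈ s, wt' u • u = x - μ • z := by
          simp only [hwt'def, sub_smul, ite_smul, zero_smul]
          rw [Finset.sum_sub_distrib, Finset.sum_sub_distrib, hxsum,
            Finset.sum_ite_eq' s v₀ (fun u => (μ * (1 - θ)) • u), if_pos hv₀s,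
            Finset.sum_ite_eq' s w₀ (fun u => (μ * θ) • u), if_pos hw₀s, hzcombo]
          module
        rcases eq_or_lt_of_le hμ1 with hμeq | hμlt
        · -- μ = 1 : x = z
          have hall0 : ∀ u ∈ s, wt' u = 0 := by
            intro u hu
            have := (Finset.sum_eq_zero_iff_of_nonneg hwt'0).1 (by rw [hwt'sum, hμeq]; ring)
            exact this u hu
          have : x - μ • z = 0 := by
            rw [← hwt'pt]
            exact Finset.sum_eq_zero (fun u hu => by rw [hall0 u hu, zero_smul])
          have hx_eq : x = z := by
            have hxz : x = μ • z := sub_eq_zero.1 this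
            rw [hxz, hμeq, one_smul]
          rw [hx_eq]
          exact subset_convexHull ℝ _ (Finset.mem_coe.2 hzmem)
        · -- μ < 1
          have h1μ : (0:ℝ) < 1 - μ := by linarith
          have hdrop : ∃ u₀ ∈ s, wt' u₀ = 0 := by
            rcases le_total (wt v₀ / (1 - θ)) (if θ = 0 then 1 else wt w₀ / θ) with hm | hm
            · refine ⟨v₀, hv₀s, ?_⟩
              have hμ_eq : μ = wt v₀ / (1 - θ) := min_eq_left hm
              rw [hwt'v₀, hμ_eq, div_mul_cancel₀ _ h1θ.ne', sub_self]
            · have hμ_eq : μ = if θ = 0 then 1 else wt w₀ / θ := min_eq_right hm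
              rcases eq_or_ne θ 0 with h | h
              · rw [h] at hμ_eq; simp at hμ_eq; rw [hμ_eq] at hμlt; exact absurd hμlt (lt_irrefl 1)
              · have hθpos : 0 < θ := lt_of_le_of_ne hθ0 (Ne.symm h)
                refine ⟨w₀, hw₀s, ?_⟩
                rw [hwt'w₀, hμ_eq, if_neg h, div_mul_cancel₀ _ hθpos.ne', sub_self]
          obtain ⟨u₀, hu₀s, hu₀⟩ := hdrop
          set wt'' : E d → ℝ := fun u => (1 - μ)⁻¹ * wt' u with hwt''def
          set x' : E d := (1 - μ)⁻¹ • (x - μ • z) with hx'def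
          have hwt''sum : ∑ u ∈ s.erase u₀, wt'' u = 1 := by
            rw [Finset.sum_erase _ (by rw [hwt''def]; simp [hu₀])]
            simp only [hwt''def]
            rw [← Finset.mul_sum, hwt'sum, inv_mul_cancel₀ h1μ.ne']
          have hwt''pt : ∑ u ∈ s.erase u₀, wt'' u • u = x' := by
            rw [Finset.sum_erase _ (by simp only [hwt''def]; rw [hu₀, mul_zero, zero_smul])]
            simp only [hwt''def, hx'def, mul_smul]
            rw [← Finset.smul_sum, hwt'pt]
          have hx'mem : x' ∈ convexHull ℝ ((s.erase u₀ : Finset (E d)) : Set (E d)) := by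
            rw [Finset.convexHull_eq]
            refine ⟨wt'', fun u hu => mul_nonneg (by positivity)
              (hwt'0 u (Finset.mem_of_mem_erase hu)), hwt''sum, ?_⟩
            rw [Finset.centerMass_eq_of_sum_1 _ id hwt''sum]
            simpa using hwt''pt
          have hx'c : ⟪x', c⟫ ≤ r := by
            rw [hx'def, real_inner_smul_left, inner_sub_left, real_inner_smul_left, hzc]
            have h2 : ⟪x, c⟫ - μ * r ≤ (1 - μ) * r := by linarith
            calc (1 - μ)⁻¹ * (⟪x, c⟫ - μ * r) ≤ (1 - μ)⁻¹ * ((1 - μ) * r) :=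
                  mul_le_mul_of_nonneg_left h2 (by positivity)
              _ = r := by field_simp
          have hcard' : (s.erase u₀).card ≤ N := by
            rw [Finset.card_erase_of_mem hu₀s]; omega
          have hx'cut := ih _ hcard' x' hx'mem hx'c
          have hx'cut' : x' ∈ convexHull ℝ ((cutSet c r s : Finset (E d)) : Set (E d)) :=
            convexHull_mono (Finset.coe_subset.2 (cutSet_mono (Finset.erase_subset _ _) c r)) hx'cut
          have hz' : z ∈ convexHull ℝ ((cutSet c r s : Finset (E d)) : Set (E d)) :=
            subset_convexHull ℝ _ (Finset.mem_coe.2 hzmem)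
          have hxcombo : x = μ • z + (1 - μ) • x' := by
            rw [hx'def, smul_smul, mul_inv_cancel₀ h1μ.ne', one_smul]
            module
          rw [hxcombo]
          exact (convex_convexHull ℝ _) hz' hx'cut' hμpos.le h1μ.le (by ring)

lemma convexHull_cutSet (c : E d) (r : ℝ) (s : Finset (E d)) :
    convexHull ℝ ((cutSet c r s : Finset (E d)) : Set (E d))
      = convexHull ℝ (s : Set (E d)) ∩ {x | ⟪x, c⟫ ≤ r} := by
  apply Set.Subset.antisymm
  · apply convexHull_min (cutSet_subset c r s)
    exact (convex_convexHull ℝ _).inter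
      (convex_halfSpace_le ⟨fun a b => inner_add_left a b c, fun t a => real_inner_smul_left a c t⟩ r)
  · rintro x ⟨hx, hxc⟩
    exact subset_cut_aux c r s.card s le_rfl x hx hxc

lemma polyCut (s : Finset (E d)) (L : List (E d × ℝ)) :
    ∃ t : Finset (E d), convexHull ℝ ((t : Finset (E d)) : Set (E d))
      = convexHull ℝ (s : Set (E d)) ∩ {x | ∀ p ∈ L, ⟪x, p.1⟫ ≤ p.2} := by
  induction L with
  | nil =>
    refine ⟨s, ?_⟩
    have : {x : E d | ∀ p ∈ ([] : List (E d × ℝ)), ⟪x, p.1⟫ ≤ p.2} = Set.univ := by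
      ext x; simp
    rw [this, Set.inter_univ]
  | cons hd tl ihL =>
    obtain ⟨t, ht⟩ := ihL
    refine ⟨cutSet hd.1 hd.2 t, ?_⟩
    rw [convexHull_cutSet, ht]
    ext x
    simp only [Set.mem_inter_iff, Set.mem_setOf_eq, List.mem_cons]
    constructor
    · rintro ⟨⟨hs, htl⟩, hhd⟩
      refine ⟨hs, ?_⟩
      rintro p (rfl | hp)
      · exact hhd
      · exact htl p hp
    · rintro ⟨hs, h⟩
      exact ⟨⟨hs, fun p hp => h p (Or.inr hp)⟩, h hd (Or.inl rfl)⟩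

end MSRAux

/-- Metric subregularity of the best-response value function: there is
`α > 0`, depending only on the set of minimax strategies, with
`max_{y ∈ Y} xᵀAy - v* ≥ α ‖x - Π_{X*}(x)‖` for all `x ∈ X`. -/
theorem exists_metric_subregularity_constant
    {m n : ℕ} (A : Matrix (Fin m) (Fin n) ℝ) (X : Set (E m)) (Y : Set (E n))
    (hX : isPolytope X) (hY : isPolytope Y) :
    ∃ α > 0, ∀ x ∈ X,
      gmax A Y x - vStar A X Y ≥ α * ‖x - projOn (minimaxSet A X Y) x‖ := by
  classical
  obtain ⟨sX, hsXne, hXeq⟩ := hX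
  obtain ⟨tY, htYne, hYeq⟩ := hY
  -- the payoff vectors
  set cv : E n → E m := fun y => toE (A.mulVec y) with hcv
  have hpay : ∀ (x : E m) (y : E n), pay A x y = ⟪x, cv y⟫ := fun x y => rfl
  have hcv_lin : ∀ y : E n, cv y = Matrix.toEuclideanLin A y := by
    intro y
    rw [Matrix.toEuclideanLin_apply]
    rfl
  -- the max function
  set f : E m → ℝ := fun x => tY.sup' htYne (fun y => ⟪x, cv y⟫) with hfdef
  have hf_ge : ∀ (x : E m) (y : E n), y ∈ tY → ⟪x, cv y⟫ ≤ f x :=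
    fun x y hy => Finset.le_sup' (fun y => ⟪x, cv y⟫) hy
  have hf_ex : ∀ x : E m, ∃ y ∈ tY, f x = ⟪x, cv y⟫ := by
    intro x
    obtain ⟨y, hy, hval⟩ := Finset.exists_mem_eq_sup' htYne (fun y => ⟪x, cv y⟫)
    exact ⟨y, hy, hval⟩
  have hgmax : ∀ x : E m, gmax A Y x = f x := by
    intro x
    apply IsGreatest.csSup_eq
    constructor
    · obtain ⟨y, hy, hval⟩ := hf_ex x
      exact ⟨y, hYeq ▸ subset_convexHull ℝ _ hy, (hpay x y).symm.trans hval.symm⟩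
    · rintro v ⟨y, hyY, rfl⟩
      have hsub : Y ⊆ {y' : E n | ⟪x, cv y'⟫ ≤ f x} := by
        rw [hYeq]
        apply convexHull_min
        · intro y' hy'
          exact hf_ge x y' (Finset.mem_coe.1 hy')
        · apply convex_halfSpace_le
          constructor
          · intro a b
            simp only [hcv_lin, map_add, inner_add_right]
          · intro t a
            simp only [hcv_lin, map_smul, inner_smul_right, smul_eq_mul]
      exact hsub hyY
  -- basic facts about X
  have hXconv : Convex ℝ X := hXeq ▸ convex_convexHull ℝ _
  have hXcpt : IsCompact X := hXeq ▸ sX.finite_toSet.isCompact_convexHull (𝕜 := ℝ)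
  have hXcl : IsClosed X := hXcpt.isClosed
  have hXne : X.Nonempty := by
    obtain ⟨x0, hx0⟩ := hsXne
    exact ⟨x0, hXeq ▸ subset_convexHull ℝ _ hx0⟩
  have hf_cont : Continuous f := by
    apply Continuous.finset_sup'_apply htYne
    intro y _
    exact Continuous.inner continuous_id continuous_const
  obtain ⟨xs, hxsX, hxsmin⟩ := hXcpt.exists_isMinOn hXne hf_cont.continuousOn
  set v : ℝ := f xs with hvdef
  have hlb : ∀ x ∈ X, v ≤ f x := fun x hx => hxsmin hx
  have hvStar : vStar A X Y = v := by
    have himg : gmax A Y '' X = f '' X := Set.image_congr (fun x _ => hgmax x)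
    rw [vStar, himg]
    exact IsLeast.csInf_eq ⟨⟨xs, hxsX, rfl⟩, by rintro w ⟨x, hx, rfl⟩; exact hlb x hx⟩
  -- the minimax set
  set mm : Set (E m) := minimaxSet A X Y with hmmdef
  have hmm_iff : ∀ x : E m, x ∈ mm ↔ x ∈ X ∧ f x ≤ v := by
    intro x
    constructor
    · rintro ⟨hx, hmin⟩
      refine ⟨hx, ?_⟩
      have := hmin xs hxsX
      rwa [hgmax, hgmax] at this
    · rintro ⟨hx, hle⟩
      refine ⟨hx, fun x' hx' => ?_⟩
      rw [hgmax, hgmax]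
      exact hle.trans (hlb x' hx')
  have hmm_sub : mm ⊆ X := fun x hx => ((hmm_iff x).1 hx).1
  have hmm_ne : mm.Nonempty := ⟨xs, (hmm_iff xs).2 ⟨hxsX, le_rfl⟩⟩
  have hf_convex : ConvexOn ℝ Set.univ f := by
    refine ⟨convex_univ, ?_⟩
    intro a _ b _ p q hp hq hpq
    obtain ⟨y, hy, hval⟩ := hf_ex (p • a + q • b)
    rw [hval, inner_add_left, real_inner_smul_left, real_inner_smul_left]
    have h1 : p * ⟪a, cv y⟫ ≤ p * f a := mul_le_mul_of_nonneg_left (hf_ge a y hy) hp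
    have h2 : q * ⟪b, cv y⟫ ≤ q * f b := mul_le_mul_of_nonneg_left (hf_ge b y hy) hq
    simp only [smul_eq_mul]
    linarith
  have hmm_convex : Convex ℝ mm := by
    have heq : mm = X ∩ {x : E m | f x ≤ v} := Set.ext fun x => by
      rw [hmm_iff]; exact Iff.rfl
    rw [heq]
    apply hXconv.inter
    have := hf_convex.convex_le v
    simpa using this
  have hmm_closed : IsClosed mm := by
    have heq : mm = X ∩ f ⁻¹' Set.Iic v := Set.ext fun x => by
      rw [hmm_iff]; exact Iff.rfl
    rw [heq]
    exact hXcl.inter (isClosed_Iic.preimage hf_cont)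
  have hmm_cpt : IsCompact mm := IsCompact.of_isClosed_subset hXcpt hmm_closed hmm_sub
  -- distance to mm
  set dd : E m → ℝ := fun x => Metric.infDist x mm with hdddef
  have hdd_nonneg : ∀ x : E m, 0 ≤ dd x := fun x => Metric.infDist_nonneg
  have hproj : ∀ x : E m, ‖x - projOn mm x‖ = dd x := by
    intro x
    have hex : ∃ p ∈ mm, ∀ q ∈ mm, ‖x - p‖ ≤ ‖x - q‖ := by
      obtain ⟨p, hp, hmin⟩ := hmm_cpt.exists_isMinOn hmm_ne
        ((continuous_const.sub continuous_id).norm.continuousOn)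
      exact ⟨p, hp, fun q hq => hmin hq⟩
    rw [projOn, dif_pos hex]
    obtain ⟨hp, hmin⟩ := hex.choose_spec
    apply le_antisymm
    · obtain ⟨q, hq, hqd⟩ := hmm_cpt.exists_infDist_eq_dist hmm_ne x
      simp only [hdddef]
      rw [hqd, dist_eq_norm]
      exact hmin q hq
    · calc dd x ≤ dist x hex.choose := Metric.infDist_le_dist_of_mem hp
        _ = ‖x - hex.choose‖ := dist_eq_norm _ _
  have hdd_convex : ConvexOn ℝ Set.univ dd := by
    refine ⟨convex_univ, ?_⟩
    intro a _ b _ p q hp hq hpq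
    obtain ⟨pa, hpa, hda⟩ := hmm_cpt.exists_infDist_eq_dist hmm_ne a
    obtain ⟨pb, hpb, hdb⟩ := hmm_cpt.exists_infDist_eq_dist hmm_ne b
    have hmem : p • pa + q • pb ∈ mm := hmm_convex hpa hpb hp hq hpq
    have hvec : (p • a + q • b) - (p • pa + q • pb) = p • (a - pa) + q • (b - pb) := by
      module
    simp only [smul_eq_mul]
    calc dd (p • a + q • b) ≤ dist (p • a + q • b) (p • pa + q • pb) :=
          Metric.infDist_le_dist_of_mem hmem
      _ = ‖p • (a - pa) + q • (b - pb)‖ := by rw [dist_eq_norm, hvec]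
      _ ≤ ‖p • (a - pa)‖ + ‖q • (b - pb)‖ := norm_add_le _ _
      _ = p * ‖a - pa‖ + q * ‖b - pb‖ := by
          rw [norm_smul_of_nonneg hp, norm_smul_of_nonneg hq]
      _ = p * dd a + q * dd b := by
          simp only [hdddef]
          rw [hda, hdb, dist_eq_norm, dist_eq_norm]
  -- the cells
  have hcell : ∀ j ∈ tY, ∃ t : Finset (E m), convexHull ℝ ((t : Finset (E m)) : Set (E m)) =
      X ∩ {x : E m | ∀ y' ∈ tY, ⟪x, cv y'⟫ ≤ ⟪x, cv j⟫} := by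
    intro j hj
    obtain ⟨t, ht⟩ := MSRAux.polyCut sX (tY.toList.map (fun y' => (cv y' - cv j, (0:ℝ))))
    refine ⟨t, ?_⟩
    rw [ht, ← hXeq]
    have hset : {x : E m | ∀ p ∈ tY.toList.map (fun y' => (cv y' - cv j, (0:ℝ))), ⟪x, p.1⟫ ≤ p.2}
        = {x : E m | ∀ y' ∈ tY, ⟪x, cv y'⟫ ≤ ⟪x, cv j⟫} := by
      ext x
      simp only [Set.mem_setOf_eq, List.mem_map]
      constructor
      · intro h y' hy'
        have h0 : ⟪x, cv y' - cv j⟫ ≤ (0:ℝ) :=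
          h (cv y' - cv j, 0) ⟨y', Finset.mem_toList.2 hy', rfl⟩
        rw [inner_sub_right] at h0
        linarith
      · rintro h p ⟨y', hy', rfl⟩
        show ⟪x, cv y' - cv j⟫ ≤ (0:ℝ)
        rw [inner_sub_right]
        have := h y' (Finset.mem_toList.1 hy')
        linarith
    rw [hset]
  choose T hT using fun (j : {j // j ∈ tY}) => hcell j.1 j.2
  set W : Finset (E m) := tY.attach.biUnion T with hWdef
  have hWmem : ∀ (j : E n) (hj : j ∈ tY) (w : E m), w ∈ T ⟨j, hj⟩ → w ∈ W := by
    intro j hj w hw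
    exact Finset.mem_biUnion.2 ⟨⟨j, hj⟩, Finset.mem_attach _ _, hw⟩
  have hWX : ∀ w ∈ W, w ∈ X := by
    intro w hw
    obtain ⟨j, _, hwj⟩ := Finset.mem_biUnion.1 hw
    have hmem : w ∈ convexHull ℝ ((T j : Finset (E m)) : Set (E m)) :=
      subset_convexHull ℝ _ (Finset.mem_coe.2 hwj)
    rw [hT j] at hmem
    exact hmem.1
  -- the constant
  set G : Finset (E m) := W.filter (fun w => 0 < dd w) with hGdef
  set α : ℝ := if hGne : G.Nonempty then
      min 1 (G.inf' hGne (fun w => (f w - v) / dd w)) else 1 with hαdef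
  have hfv_pos : ∀ w ∈ W, 0 < dd w → 0 < f w - v := by
    intro w hw hdw
    have hwX := hWX w hw
    rcases lt_or_eq_of_le (hlb w hwX) with h | h
    · linarith
    · exfalso
      have hwm : w ∈ mm := (hmm_iff w).2 ⟨hwX, le_of_eq h.symm⟩
      have : dd w = 0 := by
        simp only [hdddef]
        exact Metric.infDist_zero_of_mem hwm
      rw [this] at hdw
      exact lt_irrefl 0 hdw
  have hα_pos : 0 < α := by
    rw [hαdef]
    split_ifs with hGne
    · apply lt_min one_pos
      rw [Finset.lt_inf'_iff]
      intro w hw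
      have hwW : w ∈ W := (Finset.mem_filter.1 hw).1
      have hdw : 0 < dd w := (Finset.mem_filter.1 hw).2
      exact div_pos (hfv_pos w hwW hdw) hdw
    · exact one_pos
  have hkey : ∀ w ∈ W, α * dd w ≤ f w - v := by
    intro w hw
    rcases eq_or_lt_of_le (hdd_nonneg w) with h0 | h0
    · rw [← h0, mul_zero]
      have := hlb w (hWX w hw)
      linarith
    · have hwG : w ∈ G := Finset.mem_filter.2 ⟨hw, h0⟩
      have hGne : G.Nonempty := ⟨w, hwG⟩
      have hα_le : α ≤ (f w - v) / dd w := by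
        rw [hαdef, dif_pos hGne]
        exact (min_le_right _ _).trans (Finset.inf'_le _ hwG)
      calc α * dd w ≤ ((f w - v) / dd w) * dd w := mul_le_mul_of_nonneg_right hα_le h0.le
        _ = f w - v := div_mul_cancel₀ _ h0.ne'
  -- conclusion
  refine ⟨α, hα_pos, ?_⟩
  intro x hxX
  rw [ge_iff_le, hgmax, hvStar, hproj]
  obtain ⟨j, hj, hfj⟩ := hf_ex x
  have hxC : x ∈ convexHull ℝ ((T ⟨j, hj⟩ : Finset (E m)) : Set (E m)) := by
    rw [hT ⟨j, hj⟩]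
    exact ⟨hxX, fun y' hy' => hfj ▸ hf_ge x y' hy'⟩
  rw [Finset.convexHull_eq] at hxC
  obtain ⟨wt, hwt0, hwt1, hwtx⟩ := hxC
  set tj : Finset (E m) := T ⟨j, hj⟩ with htjdef
  have hxsum : ∑ u ∈ tj, wt u • u = x := by
    rw [Finset.centerMass_eq_of_sum_1 _ id hwt1] at hwtx
    simpa using hwtx
  have htj_sub : ∀ u ∈ tj, u ∈ W ∧ f u = ⟪u, cv j⟫ := by
    intro u hu
    have huC : u ∈ convexHull ℝ ((tj : Finset (E m)) : Set (E m)) :=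
      subset_convexHull ℝ _ (Finset.mem_coe.2 hu)
    rw [htjdef, hT ⟨j, hj⟩] at huC
    refine ⟨hWmem j hj u hu, ?_⟩
    apply le_antisymm
    · exact Finset.sup'_le _ _ (fun y' hy' => huC.2 y' hy')
    · exact hf_ge u j hj
  have hfx : f x - v = ∑ u ∈ tj, wt u * (f u - v) := by
    have h1 : ⟪x, cv j⟫ = ∑ u ∈ tj, wt u * ⟪u, cv j⟫ := by
      rw [← hxsum, sum_inner]
      simp_rw [real_inner_smul_left]
    have h2 : ∑ u ∈ tj, wt u * (f u - v) = ∑ u ∈ tj, wt u * f u - (∑ u ∈ tj, wt u) * v := by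
      rw [Finset.sum_mul, ← Finset.sum_sub_distrib]
      apply Finset.sum_congr rfl
      intro u _
      ring
    have h3 : ∑ u ∈ tj, wt u * f u = ∑ u ∈ tj, wt u * ⟪u, cv j⟫ :=
      Finset.sum_congr rfl (fun u hu => by rw [(htj_sub u hu).2])
    rw [hfj, h1, h2, h3, hwt1, one_mul]
  have hjensen : dd x ≤ ∑ u ∈ tj, wt u * dd u := by
    have := hdd_convex.map_sum_le hwt0 hwt1 (fun u _ => Set.mem_univ u) (p := fun u => u)
    rw [hxsum] at this
    simpa [smul_eq_mul] using this
  calc α * dd x ≤ α * ∑ u ∈ tj, wt u * dd u := mul_le_mul_of_nonneg_left hjensen hα_pos.le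
    _ = ∑ u ∈ tj, wt u * (α * dd u) := by
        rw [Finset.mul_sum]
        exact Finset.sum_congr rfl (fun u _ => by ring)
    _ ≤ ∑ u ∈ tj, wt u * (f u - v) :=
        Finset.sum_le_sum (fun u hu => mul_le_mul_of_nonneg_left
          (hkey u (htj_sub u hu).1) (hwt0 u hu))
    _ = f x - v := hfx.symm
end
end

section
/- Let q > 0 and let (B_t)_{t≥1} be a sequence of non-negative real numbers satisfying B_{t+1} ≤ B_t − q·B_{t+1}² for all t ≥ 1, and 2q·B_1 ≤ 1. Then for every t ≥ 1: B_t ≤ max(B_1, 2/q)/t. -/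
/-- If a non-negative sequence satisfies `B_{t+1} ≤ B_t - q B_{t+1}²` for all
`t ≥ 1` and `2 q B_1 ≤ 1`, then `B_t ≤ max(B_1, 2/q) / t` for every `t ≥ 1`. -/
theorem recursive_sequence_rate
    (q : ℝ) (hq : 0 < q) (B : ℕ → ℝ)
    (hBnonneg : ∀ t, 1 ≤ t → 0 ≤ B t)
    (hrec : ∀ t, 1 ≤ t → B (t + 1) ≤ B t - q * B (t + 1) ^ 2)
    (hinit : 2 * q * B 1 ≤ 1) :
    ∀ t : ℕ, 1 ≤ t → B t ≤ max (B 1) (2 / q) / t := by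
  set M := max (B 1) (2 / q) with hM
  have hM1 : B 1 ≤ M := le_max_left _ _
  have hM2 : 2 / q ≤ M := le_max_right _ _
  have hqM : 2 ≤ M * q := (div_le_iff₀ hq).mp hM2
  have hMpos : 0 < M := lt_of_lt_of_le (by positivity) hM2
  intro t ht
  induction t with
  | zero => omega
  | succ n ih =>
    rcases Nat.eq_zero_or_pos n with hn | hn
    · subst hn; simpa using hM1
    · have hn1 : (1:ℕ) ≤ n := hn
      have ihn := ih hn1
      have hrecn := hrec n hn1
      have hBpos := hBnonneg (n+1) (by omega)
      by_contra hcon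
      push_neg at hcon
      have htn : (1:ℝ) ≤ (n:ℝ) := by exact_mod_cast hn1
      push_cast at hcon ihn
      have hdiv : (0:ℝ) < (n:ℝ) := by linarith
      have hdiv1 : (0:ℝ) < (n:ℝ) + 1 := by linarith
      set x := B (n+1) with hx
      have key : x + q * x ^ 2 ≤ M / n := by linarith
      set a := M / ((n:ℝ) + 1) with ha
      have hapos : 0 < a := by positivity
      have hxa : 0 < x + a := by linarith
      have step1 : a + q * a ^ 2 < x + q * x ^ 2 := by
        nlinarith [mul_pos hq (mul_pos (sub_pos.mpr hcon) hxa)]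
      have e1 : a * ((n:ℝ) + 1) = M := div_mul_cancel₀ _ (by linarith)
      have e2 : q * a * ((n:ℝ) + 1) = q * M := by rw [mul_assoc, e1]
      have e3 : q * a * (n:ℝ) * ((n:ℝ) + 1) = q * M * (n:ℝ) := by
        rw [show q * a * (n:ℝ) * ((n:ℝ)+1) = (q * a * ((n:ℝ)+1)) * (n:ℝ) by ring, e2]
      have h3 : 1 ≤ q * a * (n:ℝ) := by
        rw [← mul_le_mul_iff_of_pos_right hdiv1]
        nlinarith [mul_le_mul_of_nonneg_right hqM hdiv.le]
      have step2 : M / (n:ℝ) ≤ a + q * a ^ 2 := by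
        rw [div_le_iff₀ hdiv]
        nlinarith [mul_le_mul_of_nonneg_left h3 hapos.le]
      linarith
end

section
/- Let μ > 0, and let b* ∈ ℝ^m be the common value of Ay^μ over all y^μ ∈ Y^μ. Then there exists a positive constant β > 0 such that for every y ∈ Y: ‖Ay − b*‖² ≥ β‖y − Π_{Y^μ}(y)‖². -/
open scoped RealInnerProductSpace Classical

noncomputable section

lemma halfspace_cut {k : ℕ} (V : Finset (E k)) (ℓ : E k →ₗ[ℝ] ℝ) (α : ℝ) :
    ∃ W : Finset (E k),
      (W : Set (E k)) ⊆ (convexHull ℝ (V : Set (E k))) ∩ {y | ℓ y ≤ α} ∧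
      (convexHull ℝ (V : Set (E k))) ∩ {y | ℓ y ≤ α} ⊆ convexHull ℝ (W : Set (E k)) := by
  classical
  set p : E k × E k → E k :=
    fun q => q.1 + ((α - ℓ q.1) / (ℓ q.2 - ℓ q.1)) • (q.2 - q.1) with hp
  set U : Finset (E k) := V.filter (fun v => ℓ v < α) with hU
  set B : Finset (E k) := V.filter (fun v => α < ℓ v) with hB
  set Vle : Finset (E k) := V.filter (fun v => ℓ v ≤ α) with hVle
  set W : Finset (E k) := Vle ∪ (U ×ˢ B).image p with hW
  -- basic facts about p
  have hpseg : ∀ u ∈ U, ∀ b ∈ B, p (u, b) ∈ convexHull ℝ (V : Set (E k)) ∧ ℓ (p (u, b)) = α := by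
    intro u hu b hb
    have hu' := Finset.mem_filter.1 hu
    have hb' := Finset.mem_filter.1 hb
    have hlt : ℓ u < ℓ b := lt_trans hu'.2 hb'.2
    have hne : ℓ b - ℓ u ≠ 0 := by linarith
    have ht0 : 0 ≤ (α - ℓ u) / (ℓ b - ℓ u) := by
      apply div_nonneg <;> linarith
    have ht1 : (α - ℓ u) / (ℓ b - ℓ u) ≤ 1 := by
      rw [div_le_one (by linarith)]; linarith
    constructor
    · have : p (u, b) = (1 - (α - ℓ u) / (ℓ b - ℓ u)) • u + ((α - ℓ u) / (ℓ b - ℓ u)) • b := by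
        simp only [hp]; module
      rw [this]
      exact (convex_convexHull ℝ _)
        (subset_convexHull ℝ _ hu'.1) (subset_convexHull ℝ _ hb'.1)
        (by linarith) ht0 (by ring)
    · simp only [hp, map_add, map_smul, map_sub, smul_eq_mul]
      field_simp
      ring
  refine ⟨W, ?_, ?_⟩
  · -- W ⊆ conv V ∩ H
    intro w hw
    rcases Finset.mem_union.1 hw with h | h
    · have h' := Finset.mem_filter.1 h
      exact ⟨subset_convexHull ℝ _ h'.1, h'.2⟩
    · rcases Finset.mem_image.1 h with ⟨q, hq, rfl⟩
      rcases Finset.mem_product.1 hq with ⟨hq1, hq2⟩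
      have := hpseg q.1 hq1 q.2 hq2
      exact ⟨this.1, le_of_eq this.2⟩
  · -- the hard inclusion
    rintro y ⟨hyV, hyH⟩
    rw [Finset.convexHull_eq] at hyV
    obtain ⟨lam, hlam0, hlam1, hcm⟩ := hyV
    have hy : ∑ v ∈ V, lam v • v = y := by
      rw [Finset.centerMass_eq_of_sum_1 V id hlam1] at hcm; simpa using hcm
    have hWsubset : (W : Set (E k)) ⊆ convexHull ℝ (W : Set (E k)) := subset_convexHull ℝ _
    -- split of V-sums
    have hVsplit : ∀ {β : Type} [AddCommMonoid β] (f : E k → β),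
        ∑ v ∈ V, f v = (∑ v ∈ U, f v + ∑ v ∈ V.filter (fun v => ℓ v = α), f v) + ∑ v ∈ B, f v := by
      intro β _ f
      rw [← Finset.sum_filter_add_sum_filter_not V (fun v => ℓ v ≤ α) f]
      congr 1
      · rw [← Finset.sum_filter_add_sum_filter_not (V.filter (fun v => ℓ v ≤ α)) (fun v => ℓ v < α) f]
        congr 1
        · congr 1; ext v; simp only [Finset.mem_filter, hU]; constructor
          · rintro ⟨⟨h1, _⟩, h3⟩; exact ⟨h1, h3⟩
          · rintro ⟨h1, h2⟩; exact ⟨⟨h1, le_of_lt h2⟩, h2⟩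
        · congr 1; ext v; simp only [Finset.mem_filter]; constructor
          · rintro ⟨⟨h1, h2⟩, h3⟩; exact ⟨h1, le_antisymm h2 (not_lt.1 h3)⟩
          · rintro ⟨h1, h2⟩; exact ⟨⟨h1, le_of_eq h2⟩, by rw [h2]; exact lt_irrefl α⟩
      · congr 1; ext v; simp only [Finset.mem_filter, hB, not_le]
    have hfUV : Vle.filter (fun v => ℓ v < α) = V.filter (fun v => ℓ v < α) := by
      ext v; simp only [Finset.mem_filter, hVle]; constructor
      · rintro ⟨⟨h1, _⟩, h3⟩; exact ⟨h1, h3⟩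
      · rintro ⟨h1, h2⟩; exact ⟨⟨h1, le_of_lt h2⟩, h2⟩
    have hfMV : Vle.filter (fun v => ¬ ℓ v < α) = V.filter (fun v => ℓ v = α) := by
      ext v; simp only [Finset.mem_filter, hVle]; constructor
      · rintro ⟨⟨h1, h2⟩, h3⟩; exact ⟨h1, le_antisymm h2 (not_lt.1 h3)⟩
      · rintro ⟨h1, h2⟩; exact ⟨⟨h1, le_of_eq h2⟩, by rw [h2]; exact lt_irrefl α⟩
    set M : Finset (E k) := V.filter (fun v => ℓ v = α) with hM
    set D : ℝ := ∑ u ∈ U, lam u * (α - ℓ u) with hD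
    set K : ℝ := ∑ b ∈ B, lam b * (ℓ b - α) with hK
    have hD0 : 0 ≤ D := Finset.sum_nonneg (by
      intro u hu; have := Finset.mem_filter.1 hu
      exact mul_nonneg (hlam0 u this.1) (by linarith [this.2]))
    have hK0 : 0 ≤ K := Finset.sum_nonneg (by
      intro b hb; have := Finset.mem_filter.1 hb
      exact mul_nonneg (hlam0 b this.1) (by linarith [this.2]))
    have hyH' : ℓ y ≤ α := hyH
    have hly : ∑ v ∈ V, lam v * ℓ v ≤ α := by
      have h : ℓ y = ∑ v ∈ V, lam v * ℓ v := by
        rw [← hy, map_sum]; simp [smul_eq_mul]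
      linarith [h ▸ hyH']
    have hKD : K ≤ D := by
      have h1 : ∑ v ∈ V, lam v * (ℓ v - α) = (∑ v ∈ V, lam v * ℓ v) - α := by
        simp [mul_sub, Finset.sum_sub_distrib, ← Finset.sum_mul, hlam1]
      have h2 := hVsplit (fun v => lam v * (ℓ v - α))
      have h3 : ∑ v ∈ U, lam v * (ℓ v - α) + D = 0 := by
        rw [hD, ← Finset.sum_add_distrib]; apply Finset.sum_eq_zero; intro u hu; ring
      have h4 : ∑ v ∈ M, lam v * (ℓ v - α) = 0 := by
        apply Finset.sum_eq_zero; intro v hv; have := (Finset.mem_filter.1 hv).2; rw [this]; ring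
      have h5 : ∑ v ∈ B, lam v * (ℓ v - α) = K := rfl
      rw [h1, h4, h5] at h2
      linarith
    set SU : ℝ := ∑ u ∈ U, lam u with hSU
    set SM : ℝ := ∑ v ∈ M, lam v with hSM
    set SB : ℝ := ∑ b ∈ B, lam b with hSB
    have hsum : SU + SM + SB = 1 := by rw [hSU, hSM, hSB, ← hVsplit (fun v => lam v)]; exact hlam1
    by_cases hD' : D = 0
    · -- degenerate case: all bad mass is zero
      have hKz : K = 0 := le_antisymm (hD' ▸ hKD) hK0
      have hBz : ∀ b ∈ B, lam b = 0 := by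
        intro b hb
        have hall := (Finset.sum_eq_zero_iff_of_nonneg (fun b hb => by
          have := Finset.mem_filter.1 hb
          exact mul_nonneg (hlam0 b this.1) (by linarith [this.2]))).1 hKz b hb
        have hgt := (Finset.mem_filter.1 hb).2
        rcases mul_eq_zero.1 hall with h | h
        · exact h
        · linarith
      have hVsplit2 : ∀ {β : Type} [AddCommMonoid β] (f : E k → β),
          ∑ v ∈ V, f v = ∑ v ∈ Vle, f v + ∑ v ∈ B, f v := by
        intro β _ f
        rw [← Finset.sum_filter_add_sum_filter_not V (fun v => ℓ v ≤ α) f]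
        congr 2
        ext v; simp only [Finset.mem_filter, hB, not_le]
      have hBl : ∑ b ∈ B, lam b = 0 := Finset.sum_eq_zero hBz
      have hB0 : ∑ b ∈ B, lam b • b = (0 : E k) :=
        Finset.sum_eq_zero (fun b hb => by rw [hBz b hb, zero_smul])
      have hsum1 : ∑ v ∈ Vle, lam v = 1 := by
        have h := hVsplit2 (fun v => lam v)
        rw [hlam1, hBl, add_zero] at h
        exact h.symm
      have hyVle : ∑ v ∈ Vle, lam v • v = y := by
        have h := hVsplit2 (fun v => lam v • v)
        rw [hy, hB0, add_zero] at h
        exact h.symm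
      rw [← hyVle]
      exact Convex.sum_mem (convex_convexHull ℝ _)
        (fun v hv => hlam0 v (Finset.mem_filter.1 hv).1) hsum1
        (fun v hv => hWsubset (Finset.mem_union_left _ hv))
    · -- main case
      have hDpos : 0 < D := lt_of_le_of_ne hD0 (Ne.symm hD')
      set wt : (E k ⊕ (E k × E k)) → ℝ :=
        Sum.elim (fun v => if ℓ v < α then lam v * (D - K) / D else lam v)
          (fun q => lam q.1 * lam q.2 * (ℓ q.2 - ℓ q.1) / D) with hwt
      set zf : (E k ⊕ (E k × E k)) → E k := Sum.elim id p with hzf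
      set t : Finset (E k ⊕ (E k × E k)) := Vle.disjSum (U ×ˢ B) with htd
      have hKD' : 0 ≤ (D - K) / D := div_nonneg (by linarith) hD0
      -- weights are nonnegative
      have hnn : ∀ i ∈ t, 0 ≤ wt i := by
        intro i hi
        rcases i with v | q
        · have hv : v ∈ Vle := by
            have := Finset.mem_disjSum.1 hi
            rcases this with ⟨a, ha, hev⟩ | ⟨a, ha, hev⟩
            · cases hev; exact ha
            · cases hev
          have hvV := (Finset.mem_filter.1 hv).1
          simp only [hwt, Sum.elim_inl]
          split
          · rw [mul_div_assoc]; exact mul_nonneg (hlam0 v hvV) hKD'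
          · exact hlam0 v hvV
        · have hq : q ∈ U ×ˢ B := by
            have := Finset.mem_disjSum.1 hi
            rcases this with ⟨a, ha, hev⟩ | ⟨a, ha, hev⟩
            · cases hev
            · cases hev; exact ha
          obtain ⟨hq1, hq2⟩ := Finset.mem_product.1 hq
          have h1 := Finset.mem_filter.1 hq1
          have h2 := Finset.mem_filter.1 hq2
          simp only [hwt, Sum.elim_inr]
          apply div_nonneg _ hD0
          apply mul_nonneg (mul_nonneg (hlam0 _ h1.1) (hlam0 _ h2.1))
          linarith [h1.2, h2.2]
      -- points lie in the hull of W
      have hmemW : ∀ i ∈ t, zf i ∈ convexHull ℝ (W : Set (E k)) := by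
        intro i hi
        rcases i with v | q
        · have hv : v ∈ Vle := by
            rcases Finset.mem_disjSum.1 hi with ⟨a, ha, hev⟩ | ⟨a, ha, hev⟩
            · cases hev; exact ha
            · cases hev
          exact hWsubset (Finset.mem_union_left _ hv)
        · have hq : q ∈ U ×ˢ B := by
            rcases Finset.mem_disjSum.1 hi with ⟨a, ha, hev⟩ | ⟨a, ha, hev⟩
            · cases hev
            · cases hev; exact ha
          exact hWsubset (Finset.mem_union_right _ (Finset.mem_image_of_mem p hq))
      -- the weights sum to 1
      have hwtsum : ∑ i ∈ t, wt i = 1 := by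
        rw [htd, Finset.sum_disjSum]
        have e1 : ∑ v ∈ Vle, wt (Sum.inl v) = SU * (D - K) / D + SM := by
          simp only [hwt, Sum.elim_inl]
          rw [Finset.sum_ite, hfUV, hfMV, ← Finset.sum_div, ← Finset.sum_mul, ← hSU, ← hSM]
        have e2 : ∑ q ∈ U ×ˢ B, wt (Sum.inr q) = (SU * K + D * SB) / D := by
          simp only [hwt, Sum.elim_inr]
          rw [Finset.sum_product]
          have inner : ∀ u ∈ U, ∑ b ∈ B, lam u * lam b * (ℓ b - ℓ u) / D
              = (lam u * K + (lam u * (α - ℓ u)) * SB) / D := by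
            intro u hu
            rw [← Finset.sum_div]; congr 1
            have : ∑ b ∈ B, lam u * lam b * (ℓ b - ℓ u)
                = ∑ b ∈ B, (lam u * (lam b * (ℓ b - α)) + (lam u * (α - ℓ u)) * lam b) :=
              Finset.sum_congr rfl (fun b _ => by ring)
            rw [this, Finset.sum_add_distrib, ← Finset.mul_sum, ← Finset.mul_sum, ← hK, ← hSB]
          rw [Finset.sum_congr rfl inner, ← Finset.sum_div]; congr 1
          rw [Finset.sum_add_distrib, ← Finset.sum_mul, ← Finset.sum_mul, ← hSU, ← hD]
        rw [e1, e2]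
        field_simp
        linear_combination D * hsum
      -- the weighted points sum to y
      have key : ∀ u ∈ U, ∀ b ∈ B, (lam u * lam b * (ℓ b - ℓ u) / D) • p (u, b)
          = (lam u * lam b * (ℓ b - α) / D) • u + (lam u * lam b * (α - ℓ u) / D) • b := by
        intro u hu b hb
        have h1 := Finset.mem_filter.1 hu
        have h2 := Finset.mem_filter.1 hb
        have hne : ℓ b - ℓ u ≠ 0 := by have := h1.2; have := h2.2; intro h; linarith
        simp only [hp]
        match_scalars
        · field_simp; ring
        · field_simp
      set VU : E k := ∑ u ∈ U, lam u • u with hVU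
      set VM : E k := ∑ v ∈ M, lam v • v with hVM
      set VB : E k := ∑ b ∈ B, lam b • b with hVB
      have hvec : ∑ i ∈ t, wt i • zf i = y := by
        rw [htd, Finset.sum_disjSum]
        have e1 : ∑ v ∈ Vle, wt (Sum.inl v) • zf (Sum.inl v)
            = ((D - K) / D) • VU + VM := by
          simp only [hwt, hzf, Sum.elim_inl, id_eq]
          have : ∀ v, (if ℓ v < α then lam v * (D - K) / D else lam v) • v
              = if ℓ v < α then (lam v * (D - K) / D) • v else lam v • v := fun v => by
            split <;> rfl
          rw [Finset.sum_congr rfl (fun v _ => this v), Finset.sum_ite, hfUV, hfMV]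
          congr 1
          rw [hVU, Finset.smul_sum]
          exact Finset.sum_congr rfl (fun v _ => by rw [smul_smul]; congr 1; ring)
        have e2 : ∑ q ∈ U ×ˢ B, wt (Sum.inr q) • zf (Sum.inr q)
            = (K / D) • VU + VB := by
          simp only [hwt, hzf, Sum.elim_inr]
          rw [Finset.sum_product]
          have inner : ∀ u ∈ U, ∑ b ∈ B, (lam u * lam b * (ℓ b - ℓ u) / D) • p (u, b)
              = (lam u * K / D) • u + ∑ b ∈ B, (lam u * lam b * (α - ℓ u) / D) • b := by
            intro u hu
            rw [Finset.sum_congr rfl (fun b hb => key u hu b hb), Finset.sum_add_distrib]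
            congr 1
            rw [← Finset.sum_smul]; congr 1
            rw [← Finset.sum_div]; congr 1
            rw [hK, Finset.mul_sum]
            exact Finset.sum_congr rfl (fun b _ => by ring)
          rw [Finset.sum_congr rfl inner, Finset.sum_add_distrib]
          congr 1
          · rw [hVU, Finset.smul_sum]
            exact Finset.sum_congr rfl (fun u _ => by rw [smul_smul]; congr 1; ring)
          · rw [hVB, Finset.sum_comm]
            apply Finset.sum_congr rfl
            intro b hb
            rw [← Finset.sum_smul]; congr 1
            rw [← Finset.sum_div]
            have : ∑ u ∈ U, lam u * lam b * (α - ℓ u) = lam b * D := by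
              rw [hD, Finset.mul_sum]
              exact Finset.sum_congr rfl (fun u _ => by ring)
            rw [this, mul_div_assoc, div_self hD', mul_one]
        rw [e1, e2, ← hy, hVsplit (fun v => lam v • v)]
        have hone : (D - K) / D + K / D = 1 := by field_simp; ring
        rw [← hVU]
        have hstep : ((D - K) / D) • VU + VM + ((K / D) • VU + VB)
            = ((D - K) / D + K / D) • VU + VM + VB := by
          rw [add_smul]; abel
        rw [hstep, hone, one_smul]
      rw [← hvec]
      exact Convex.sum_mem (convex_convexHull ℝ _) hnn hwtsum hmemW


lemma halfspace_cuts {k : ℕ} (V : Finset (E k)) {ι : Type} (J : Finset ι)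
    (ℓ : ι → (E k →ₗ[ℝ] ℝ)) (α : ι → ℝ) :
    ∃ W : Finset (E k),
      (W : Set (E k)) ⊆ (convexHull ℝ (V : Set (E k))) ∩ {y | ∀ j ∈ J, ℓ j y ≤ α j} ∧
      (convexHull ℝ (V : Set (E k))) ∩ {y | ∀ j ∈ J, ℓ j y ≤ α j}
        ⊆ convexHull ℝ (W : Set (E k)) := by
  classical
  induction J using Finset.induction_on with
  | empty => exact ⟨V, by simp [subset_convexHull], by simp⟩
  | @insert j J hj ih =>
    obtain ⟨W', hW'1, hW'2⟩ := ih
    obtain ⟨W, hW1, hW2⟩ := halfspace_cut W' (ℓ j) (α j)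
    have hconvJ : Convex ℝ ((convexHull ℝ (V : Set (E k))) ∩ {y | ∀ i ∈ J, ℓ i y ≤ α i}) := by
      apply (convex_convexHull ℝ _).inter
      intro y hy z hz a b ha hb hab
      intro i hi
      have h1 := hy i hi
      have h2 := hz i hi
      have : (ℓ i) (a • y + b • z) = a * ℓ i y + b * ℓ i z := by
        simp [map_add, map_smul, smul_eq_mul]
      rw [Set.mem_setOf_eq] at *
      calc (ℓ i) (a • y + b • z) = a * ℓ i y + b * ℓ i z := this
        _ ≤ a * α i + b * α i := by
            apply add_le_add
            · exact mul_le_mul_of_nonneg_left h1 ha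
            · exact mul_le_mul_of_nonneg_left h2 hb
        _ = α i := by rw [← add_mul, hab, one_mul]
    have hconvW' : convexHull ℝ (W' : Set (E k))
        ⊆ (convexHull ℝ (V : Set (E k))) ∩ {y | ∀ i ∈ J, ℓ i y ≤ α i} :=
      convexHull_min hW'1 hconvJ
    refine ⟨W, ?_, ?_⟩
    · intro w hw
      obtain ⟨hw1, hw2⟩ := hW1 hw
      obtain ⟨hwV, hwJ⟩ := hconvW' hw1
      refine ⟨hwV, ?_⟩
      intro i hi
      rcases Finset.mem_insert.1 hi with rfl | hiJ
      · exact hw2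
      · exact hwJ i hiJ
    · rintro y ⟨hyV, hyJ⟩
      apply hW2
      refine ⟨hW'2 ⟨hyV, fun i hi => hyJ i (Finset.mem_insert_of_mem hi)⟩, ?_⟩
      exact hyJ j (Finset.mem_insert_self _ _)

lemma coord_abs_le_norm {k : ℕ} (x : E k) (j : Fin k) : |x j| ≤ ‖x‖ := by
  rw [EuclideanSpace.norm_eq, ← Real.sqrt_sq_eq_abs]
  apply Real.sqrt_le_sqrt
  have h := Finset.single_le_sum (f := fun i => ‖x i‖ ^ 2)
    (fun i _ => by positivity) (Finset.mem_univ j)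
  simpa [Real.norm_eq_abs, sq_abs] using h


lemma sum_smul_apply {k : ℕ} {ι : Type*} (W : Finset ι) (θ : ι → ℝ) (f : ι → E k) (j : Fin k) :
    (∑ w ∈ W, θ w • f w) j = ∑ w ∈ W, θ w * (f w) j := by
  classical
  induction W using Finset.induction_on with
  | empty => rfl
  | @insert a s ha ih =>
    rw [Finset.sum_insert ha, Finset.sum_insert ha, ← ih]
    rfl

set_option maxHeartbeats 1000000 in
/-- Quadratic error bound: the gap of the payoff vector `Ay` to the common
payoff vector `b*` of the maximin set `Yμ` bounds (up to a constant `β > 0`) the squared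
distance of `y` to `Yμ`. -/
theorem payoff_vector_gap_error_bound
    {m n : ℕ} (A : Matrix (Fin m) (Fin n) ℝ) (X : Set (E m)) (Y : Set (E n))
    (hX : isPolytope X) (hY : isPolytope Y)
    (μ : ℝ) (hμ : 0 < μ)
    (bstar : E m)
    (hb : ∀ yμ ∈ maximinSet A X Y μ, toE (A.mulVec yμ) = bstar) :
    ∃ β > 0, ∀ y ∈ Y,
      ‖toE (A.mulVec y) - bstar‖ ^ 2 ≥ β * ‖y - projOn (maximinSet A X Y μ) y‖ ^ 2 := by
  classical
  obtain ⟨VX, hVXne, hXeq⟩ := hX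
  obtain ⟨VY, hVYne, hYeq⟩ := hY
  set L : E n →ₗ[ℝ] E m := Matrix.toEuclideanLin A with hLdef
  have hLtoE : ∀ y : E n, toE (A.mulVec y) = L y := fun y => rfl
  have hLcont : Continuous L := L.continuous_of_finiteDimensional
  have hYcpt : IsCompact Y := by rw [hYeq]; exact VY.finite_toSet.isCompact_convexHull ℝ
  have hYconv : Convex ℝ Y := by rw [hYeq]; exact convex_convexHull ℝ _
  have hYne2 : Y.Nonempty := by
    obtain ⟨v, hv⟩ := hVYne
    exact ⟨v, by rw [hYeq]; exact subset_convexHull ℝ _ hv⟩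
  have hXcpt : IsCompact X := by rw [hXeq]; exact VX.finite_toSet.isCompact_convexHull ℝ
  have hXne2 : X.Nonempty := by
    obtain ⟨v, hv⟩ := hVXne
    exact ⟨v, by rw [hXeq]; exact subset_convexHull ℝ _ hv⟩
  obtain ⟨x₀, hx₀⟩ := id hXne2
  obtain ⟨R, hRball⟩ := hXcpt.isBounded.subset_closedBall 0
  have hR : ∀ x ∈ X, ‖x‖ ≤ R := fun x hx => by
    simpa [mem_closedBall_zero_iff] using hRball hx
  have hR0 : 0 ≤ R := le_trans (norm_nonneg x₀) (hR x₀ hx₀)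
  -- basic facts about hmin
  have hpaycont : ∀ y : E n, Continuous (fun x : E m => pay A x y + μ / 2 * ‖x‖ ^ 2) := by
    intro y
    simp only [pay]
    exact (continuous_id.inner continuous_const).add
      (continuous_const.mul (continuous_norm.pow 2))
  have hbdd : ∀ y : E n, BddBelow ((fun x => pay A x y + μ / 2 * ‖x‖ ^ 2) '' X) :=
    fun y => (hXcpt.image_of_continuousOn (hpaycont y).continuousOn).bddBelow
  have hminle : ∀ (y : E n), ∀ x ∈ X, hmin A X μ y ≤ pay A x y + μ / 2 * ‖x‖ ^ 2 := by
    intro y x hx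
    exact csInf_le (hbdd y) ⟨x, hx, rfl⟩
  have hminlip : ∀ y y' : E n, hmin A X μ y ≤ hmin A X μ y' + R * ‖L y - L y'‖ := by
    intro y y'
    have hstep : ∀ z ∈ (fun x => pay A x y' + μ / 2 * ‖x‖ ^ 2) '' X,
        hmin A X μ y - R * ‖L y - L y'‖ ≤ z := by
      rintro z ⟨x, hx, rfl⟩
      have h1 := hminle y x hx
      have h2 : pay A x y - pay A x y' = ⟪x, L y - L y'⟫ := by
        simp only [pay, hLtoE, inner_sub_right]
      have hcs : ⟪x, L y - L y'⟫ ≤ ‖x‖ * ‖L y - L y'‖ := real_inner_le_norm _ _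
      have hxR := hR x hx
      have hnn : (0:ℝ) ≤ ‖L y - L y'‖ := norm_nonneg _
      nlinarith
    have h3 : hmin A X μ y - R * ‖L y - L y'‖ ≤ hmin A X μ y' :=
      le_csInf (hXne2.image _) hstep
    linarith
  have hmincont : Continuous (fun y => hmin A X μ y) := by
    set Lc : E n →L[ℝ] E m := LinearMap.toContinuousLinearMap L with hLc
    set Cl : ℝ := R * ‖Lc‖ with hCl
    have hCl0 : 0 ≤ Cl := mul_nonneg hR0 (norm_nonneg _)
    have hlip : ∀ y y' : E n, |hmin A X μ y - hmin A X μ y'| ≤ Cl * ‖y - y'‖ := by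
      intro y y'
      have hnorm : ‖L y - L y'‖ ≤ ‖Lc‖ * ‖y - y'‖ := by
        have h : L y - L y' = Lc (y - y') := by simp [hLc, map_sub]
        rw [h]
        exact Lc.le_opNorm _
      have e1 : R * ‖L y - L y'‖ ≤ Cl * ‖y - y'‖ := by
        rw [hCl, mul_assoc]
        exact mul_le_mul_of_nonneg_left hnorm hR0
      have e2 : R * ‖L y' - L y‖ ≤ Cl * ‖y - y'‖ := by
        rw [norm_sub_rev]
        exact e1
      have hL1 := hminlip y y'
      have hL2 := hminlip y' y
      rw [abs_sub_le_iff]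
      constructor <;> linarith
    apply LipschitzWith.continuous (K := ⟨Cl, hCl0⟩)
    apply LipschitzWith.of_dist_le_mul
    intro y y'
    rw [Real.dist_eq, dist_eq_norm]
    exact hlip y y'
  obtain ⟨y₀, hy₀Y, hy₀max⟩ := hYcpt.exists_isMaxOn hYne2 hmincont.continuousOn
  have hy₀max' : ∀ y ∈ Y, hmin A X μ y ≤ hmin A X μ y₀ := fun y hy => hy₀max hy
  have hy₀mem : y₀ ∈ maximinSet A X Y μ := ⟨hy₀Y, fun y' hy' => hy₀max' y' hy'⟩
  have hLy₀ : L y₀ = bstar := by rw [← hLtoE]; exact hb y₀ hy₀mem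
  have hminfac : ∀ y y' : E n, L y = L y' → hmin A X μ y = hmin A X μ y' := by
    intro y y' h
    have hfun : (fun x : E m => pay A x y + μ / 2 * ‖x‖ ^ 2)
        = (fun x : E m => pay A x y' + μ / 2 * ‖x‖ ^ 2) := by
      funext x
      simp only [pay, hLtoE, h]
    simp only [hmin, hfun]
  set S : Set (E n) := Y ∩ {y | L y = bstar} with hSdef
  have hSeq : maximinSet A X Y μ = S := by
    ext y
    constructor
    · intro hy
      refine ⟨hy.1, ?_⟩
      show L y = bstar
      rw [← hLtoE]
      exact hb y hy
    · rintro ⟨hyY, hyL⟩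
      refine ⟨hyY, fun y' hy' => ?_⟩
      have he : hmin A X μ y = hmin A X μ y₀ := hminfac _ _ (by rw [hyL, hLy₀])
      rw [he]
      exact hy₀max' y' hy'
  have hSne : S.Nonempty := ⟨y₀, hy₀Y, hLy₀⟩
  have hScl : IsClosed {y : E n | L y = bstar} := isClosed_eq hLcont continuous_const
  have hScpt : IsCompact S := hYcpt.inter_right hScl
  have hSconv : Convex ℝ S := by
    apply hYconv.inter
    intro p hp q hq a b ha hb' hab
    rw [Set.mem_setOf_eq] at *
    simp only [map_add, map_smul, hp, hq]
    rw [← add_smul, hab, one_smul]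
  -- nearest point selection
  have hproj : ∀ z : E n, ∃ p ∈ S, ∀ q ∈ S, ‖z - p‖ ≤ ‖z - q‖ := by
    intro z
    obtain ⟨p, hp, hmn⟩ := hScpt.exists_isMinOn hSne
      (Continuous.continuousOn ((continuous_const.sub continuous_id).norm))
    exact ⟨p, hp, fun q hq => hmn hq⟩
  set near : E n → E n := fun z => (hproj z).choose with hneardef
  have hnearS : ∀ z, near z ∈ S := fun z => (hproj z).choose_spec.1
  have hnearmin : ∀ z, ∀ q ∈ S, ‖z - near z‖ ≤ ‖z - q‖ := fun z => (hproj z).choose_spec.2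
  set f : E n → ℝ := fun z => ‖z - near z‖ with hfdef
  have hf0 : ∀ z, 0 ≤ f z := fun z => norm_nonneg _
  have hfS : ∀ z ∈ S, f z = 0 := by
    intro z hz
    have h := hnearmin z z hz
    rw [sub_self, norm_zero] at h
    exact le_antisymm h (hf0 z)
  -- sign pieces
  set eps : Bool → ℝ := fun s => if s then 1 else -1 with hepsdef
  have hepsne : ∀ s, eps s ≠ 0 := by intro s; cases s <;> simp [hepsdef]
  set ℓσ : (Fin m → Bool) → Fin m → (E n →ₗ[ℝ] ℝ) :=
    fun σ j => (-(eps (σ j))) • ((EuclideanSpace.projₗ j).comp L) with hℓσdef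
  set ασ : (Fin m → Bool) → Fin m → ℝ := fun σ j => (-(eps (σ j))) * bstar j with hασdef
  set aσ : (Fin m → Bool) → E n → ℝ :=
    fun σ y => ∑ j, eps (σ j) * ((L y) j - bstar j) with haσdef
  have hℓapp : ∀ σ j (y : E n), ℓσ σ j y = (-(eps (σ j))) * (L y) j := by
    intro σ j y
    simp [hℓσdef, smul_eq_mul]
  have hterm : ∀ (σ : Fin m → Bool) (y : E n) (j : Fin m),
      ℓσ σ j y ≤ ασ σ j ↔ 0 ≤ eps (σ j) * ((L y) j - bstar j) := by
    intro σ y j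
    rw [hℓapp]
    simp only [hασdef]
    cases hsj : σ j <;> simp [hepsdef] <;> constructor <;> intro <;> linarith
  -- per-piece bound
  have key : ∀ σ : Fin m → Bool, ∃ C, 0 ≤ C ∧
      ∀ y ∈ Y, (∀ j, ℓσ σ j y ≤ ασ σ j) → f y ≤ C * aσ σ y := by
    intro σ
    obtain ⟨W, hW1, hW2⟩ := halfspace_cuts VY Finset.univ (ℓσ σ) (ασ σ)
    set T := W.filter (fun w => 0 < aσ σ w) with hT
    set Cσ : ℝ := (insert (0:ℝ) (T.image (fun w => f w / aσ σ w))).max'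
      (Finset.insert_nonempty _ _) with hCσ
    have hCσ0 : 0 ≤ Cσ := Finset.le_max' _ _ (Finset.mem_insert_self _ _)
    have hvert : ∀ w ∈ W, f w ≤ Cσ * aσ σ w := by
      intro w hw
      have hwmem := hW1 hw
      have hwY : w ∈ Y := by rw [hYeq]; exact hwmem.1
      have hwcons : ∀ j : Fin m, 0 ≤ eps (σ j) * ((L w) j - bstar j) :=
        fun j => (hterm σ w j).1 (hwmem.2 j (Finset.mem_univ j))
      have hwnn : 0 ≤ aσ σ w := Finset.sum_nonneg (fun j _ => hwcons j)
      rcases eq_or_lt_of_le hwnn with hz | hpos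
      · have hall := (Finset.sum_eq_zero_iff_of_nonneg (fun j _ => hwcons j)).1 hz.symm
        have hLw : L w = bstar := by
          ext j
          have hj := hall j (Finset.mem_univ j)
          rcases mul_eq_zero.1 hj with h | h
          · exact absurd h (hepsne _)
          · linarith [h]
        have hfw : f w = 0 := hfS w ⟨hwY, hLw⟩
        rw [hfw, ← hz, mul_zero]
      · have hmemT : w ∈ T := Finset.mem_filter.2 ⟨hw, hpos⟩
        have hratio : f w / aσ σ w ≤ Cσ :=
          Finset.le_max' _ _ (Finset.mem_insert_of_mem
            (Finset.mem_image_of_mem (fun w => f w / aσ σ w) hmemT))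
        calc f w = (f w / aσ σ w) * aσ σ w := by field_simp
          _ ≤ Cσ * aσ σ w := mul_le_mul_of_nonneg_right hratio (le_of_lt hpos)
    refine ⟨Cσ, hCσ0, ?_⟩
    intro y hyY hcons
    have hymem : y ∈ convexHull ℝ (W : Set (E n)) :=
      hW2 ⟨by rw [← hYeq]; exact hyY, fun j _ => hcons j⟩
    rw [Finset.convexHull_eq] at hymem
    obtain ⟨θ, hθ0, hθ1, hθcm⟩ := hymem
    have hyrep : ∑ w ∈ W, θ w • w = y := by
      rw [Finset.centerMass_eq_of_sum_1 W id hθ1] at hθcm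
      simpa using hθcm
    have hq : ∑ w ∈ W, θ w • near w ∈ S :=
      Convex.sum_mem hSconv (fun w hw => hθ0 w hw) hθ1 (fun w hw => hnearS w)
    have h1 : f y ≤ ‖y - ∑ w ∈ W, θ w • near w‖ := hnearmin y _ hq
    have h2 : ‖y - ∑ w ∈ W, θ w • near w‖ ≤ ∑ w ∈ W, θ w * f w := by
      rw [← hyrep, ← Finset.sum_sub_distrib]
      refine le_trans (norm_sum_le _ _) ?_
      apply Finset.sum_le_sum
      intro w hw
      rw [← smul_sub, norm_smul, Real.norm_eq_abs, abs_of_nonneg (hθ0 w hw)]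
    have h3 : ∑ w ∈ W, θ w * f w ≤ ∑ w ∈ W, θ w * (Cσ * aσ σ w) :=
      Finset.sum_le_sum (fun w hw => mul_le_mul_of_nonneg_left (hvert w hw) (hθ0 w hw))
    have haff : aσ σ y = ∑ w ∈ W, θ w * aσ σ w := by
      rw [← hyrep]
      simp only [haσdef]
      have hLsum : L (∑ w ∈ W, θ w • w) = ∑ w ∈ W, θ w • L w := by
        rw [map_sum]
        exact Finset.sum_congr rfl (fun w _ => by rw [map_smul])
      calc ∑ j, eps (σ j) * ((L (∑ w ∈ W, θ w • w)) j - bstar j)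
          = ∑ j, ∑ w ∈ W, θ w * (eps (σ j) * ((L w) j - bstar j)) := by
            apply Finset.sum_congr rfl
            intro j _
            rw [hLsum, sum_smul_apply]
            have hsub : (∑ w ∈ W, θ w * (L w) j) - bstar j
                = ∑ w ∈ W, θ w * ((L w) j - bstar j) := by
              simp [mul_sub, Finset.sum_sub_distrib, ← Finset.sum_mul, hθ1]
            rw [hsub, Finset.mul_sum]
            exact Finset.sum_congr rfl (fun w _ => by ring)
        _ = ∑ w ∈ W, θ w * aσ σ w := by
            rw [Finset.sum_comm]
            apply Finset.sum_congr rfl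
            intro w _
            rw [Finset.mul_sum]
    have h4 : ∑ w ∈ W, θ w * (Cσ * aσ σ w) = Cσ * aσ σ y := by
      rw [haff, Finset.mul_sum]
      exact Finset.sum_congr rfl (fun w _ => by ring)
    linarith
  choose Cf hCf0 hCf using key
  have hFinNe : (Finset.univ : Finset (Fin m → Bool)).Nonempty := Finset.univ_nonempty
  set C : ℝ := Finset.univ.sup' hFinNe Cf with hC
  have hCge : ∀ σ, Cf σ ≤ C := fun σ => Finset.le_sup' Cf (Finset.mem_univ σ)
  have hC0 : 0 ≤ C := le_trans (hCf0 (fun _ => true)) (hCge _)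
  have hglobal : ∀ y ∈ Y, f y ≤ (C * m) * ‖L y - bstar‖ := by
    intro y hyY
    set σ : Fin m → Bool := fun j => decide (bstar j ≤ (L y) j) with hσd
    have hconsj : ∀ j, 0 ≤ eps (σ j) * ((L y) j - bstar j) := by
      intro j
      by_cases h : bstar j ≤ (L y) j
      · simp [hσd, h, hepsdef]
      · simp only [hσd, h, decide_eq_true_eq, decide_eq_false_iff_not, hepsdef]
        push_neg at h
        simp [h.not_ge]
        nlinarith
    have h5 := hCf σ y hyY (fun j => (hterm σ y j).2 (hconsj j))
    have h6 : aσ σ y ≤ m * ‖L y - bstar‖ := by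
      simp only [haσdef]
      have hterm2 : ∀ j : Fin m, eps (σ j) * ((L y) j - bstar j) ≤ ‖L y - bstar‖ := by
        intro j
        have habs : |(L y) j - bstar j| ≤ ‖L y - bstar‖ := by
          have h := coord_abs_le_norm (L y - bstar) j
          have happ : (L y - bstar) j = (L y) j - bstar j := rfl
          rwa [happ] at h
        have hle : eps (σ j) * ((L y) j - bstar j) ≤ |(L y) j - bstar j| := by
          cases hsj : σ j
          · rw [show eps false = -1 by simp [hepsdef], neg_one_mul]
            exact neg_le_abs _
          · rw [show eps true = 1 by simp [hepsdef], one_mul]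
            exact le_abs_self _
        linarith
      calc ∑ j, eps (σ j) * ((L y) j - bstar j) ≤ ∑ _j : Fin m, ‖L y - bstar‖ :=
            Finset.sum_le_sum (fun j _ => hterm2 j)
        _ = m * ‖L y - bstar‖ := by
            rw [Finset.sum_const, Finset.card_univ, Fintype.card_fin, nsmul_eq_mul]
    have haσnn : 0 ≤ aσ σ y := Finset.sum_nonneg (fun j _ => hconsj j)
    calc f y ≤ Cf σ * aσ σ y := h5
      _ ≤ C * aσ σ y := mul_le_mul_of_nonneg_right (hCge σ) haσnn
      _ ≤ C * (m * ‖L y - bstar‖) := mul_le_mul_of_nonneg_left h6 hC0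
      _ = (C * m) * ‖L y - bstar‖ := by ring
  set Ct : ℝ := C * m + 1 with hCt
  have hCm0 : 0 ≤ C * m := mul_nonneg hC0 (Nat.cast_nonneg m)
  have hCt1 : 0 < Ct := by rw [hCt]; linarith
  refine ⟨1 / Ct ^ 2, by positivity, ?_⟩
  intro y hyY
  have hgn : (0:ℝ) ≤ ‖L y - bstar‖ := norm_nonneg _
  have hfy : f y ≤ Ct * ‖L y - bstar‖ := by
    have := hglobal y hyY
    rw [hCt]
    nlinarith
  have hprojle : ‖y - projOn (maximinSet A X Y μ) y‖ ≤ f y := by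
    rw [hSeq]
    simp only [projOn]
    rw [dif_pos (hproj y)]
  have h7 : ‖y - projOn (maximinSet A X Y μ) y‖ ^ 2 ≤ (Ct * ‖L y - bstar‖) ^ 2 := by
    exact pow_le_pow_left₀ (norm_nonneg _) (le_trans hprojle hfy) 2
  have hLy : toE (A.mulVec y) - bstar = L y - bstar := by rw [hLtoE]
  rw [ge_iff_le, hLy]
  have hCtne : Ct ≠ 0 := ne_of_gt hCt1
  have hexp : (1 / Ct ^ 2) * (Ct * ‖L y - bstar‖) ^ 2 = ‖L y - bstar‖ ^ 2 := by
    field_simp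
  calc 1 / Ct ^ 2 * ‖y - projOn (maximinSet A X Y μ) y‖ ^ 2
      ≤ 1 / Ct ^ 2 * (Ct * ‖L y - bstar‖) ^ 2 := by
        apply mul_le_mul_of_nonneg_left h7
        positivity
    _ = ‖L y - bstar‖ ^ 2 := hexp
end
end

section
/- Let μ > 0 and suppose the learning rate satisfies η < μ/(2(μ² + ‖A‖²)). Then for every t ≥ 1 and every y^μ ∈ Y^μ, writing z^μ = (x^μ, y^μ), the AsymP-GDA iterates satisfy the monotone distance decrease: (1/2)‖z^μ − z^{t+1}‖² − (1/2)‖z^μ − z^t‖² ≤ −(ημ/2)‖x^μ − x^{t+1}‖² − (1/4)‖z^t − z^{t+1}‖². -/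
open scoped RealInnerProductSpace Classical

noncomputable section

set_option maxHeartbeats 1000000

lemma inner_toE_mulVec {m n : ℕ} (A : Matrix (Fin m) (Fin n) ℝ) (x : E m) (y : E n) :
    ⟪x, toE (A.mulVec y)⟫ = ⟪toE (A.transpose.mulVec x), y⟫ := by
  simp only [toE, PiLp.inner_apply, RCLike.inner_apply, conj_trivial, WithLp.equiv_symm_apply, PiLp.toLp_apply,
    Matrix.mulVec, dotProduct, Matrix.transpose_apply, Finset.mul_sum, Finset.sum_mul]
  rw [Finset.sum_comm]
  congr 1; ext i; congr 1; ext j; ring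

lemma norm_toE_mulVec_le {m n : ℕ} (A : Matrix (Fin m) (Fin n) ℝ) (y : E n) :
    ‖toE (A.mulVec y)‖ ≤ matNorm A * ‖y‖ := by
  have h : toE (A.mulVec y) = (Matrix.toEuclideanLin A).toContinuousLinearMap y := by
    simp [Matrix.toEuclideanLin_apply, toE]
  rw [h]
  exact (Matrix.toEuclideanLin A).toContinuousLinearMap.le_opNorm y

lemma toE_add {k : ℕ} (u v : Fin k → ℝ) : toE (u + v) = toE u + toE v := rfl

lemma mulVec_sub' {m n : ℕ} (A : Matrix (Fin m) (Fin n) ℝ) (u v : E n) :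
    toE (A.mulVec u) - toE (A.mulVec v) = toE (A.mulVec (u - v)) := by
  ext i
  simp [toE, Matrix.mulVec, dotProduct, WithLp.equiv_symm_apply, PiLp.toLp_apply,
    ← Finset.sum_sub_distrib, mul_sub]

lemma small_t {c K : ℝ} (hK : 0 ≤ K) (h : ∀ t : ℝ, 0 < t → t ≤ 1 → c ≤ t * K) : c ≤ 0 := by
  by_contra hc
  push_neg at hc
  have ht : (0:ℝ) < min 1 (c / (2 * (K + 1))) := by
    have : 0 < c / (2 * (K + 1)) := by positivity
    simp [this]
  have := h _ ht (min_le_left _ _)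
  have h2 : min 1 (c / (2 * (K + 1))) ≤ c / (2 * (K + 1)) := min_le_right _ _
  have h3 : min 1 (c / (2 * (K + 1))) * K ≤ c / (2 * (K + 1)) * K := by nlinarith
  have h4 : c / (2 * (K + 1)) * K ≤ c / 2 := by
    rw [div_mul_eq_mul_div, div_le_iff₀ (by positivity)]
    nlinarith
  linarith

-- quadratic expansion: f u = ⟪u,c⟫ + μ/2 ‖u‖²

lemma quad_exp {k : ℕ} (c u v : E k) (μ : ℝ) :
    ⟪u, c⟫ + μ / 2 * ‖u‖ ^ 2 =
      (⟪v, c⟫ + μ / 2 * ‖v‖ ^ 2) + ⟪c + μ • v, u - v⟫ + μ / 2 * ‖u - v‖ ^ 2 := by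
  have h1 : ‖u - v‖ ^ 2 = ‖u‖ ^ 2 - 2 * ⟪u, v⟫ + ‖v‖ ^ 2 := by
    rw [norm_sub_sq_real]; try ring
  have h2 : ⟪c + μ • v, u - v⟫ = ⟪u, c⟫ - ⟪v, c⟫ + μ * ⟪u, v⟫ - μ * ‖v‖ ^ 2 := by
    rw [inner_add_left, inner_sub_right, inner_sub_right, real_inner_smul_left,
      real_inner_smul_left, real_inner_self_eq_norm_sq]
    rw [real_inner_comm u c, real_inner_comm v c, real_inner_comm v u]
    ring
  rw [h1, h2]; ring

-- VI from minimality of quadratic over convex set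

lemma vi_of_min {k : ℕ} {X : Set (E k)} (hX : Convex ℝ X) (c : E k) (μ : ℝ)
    {p : E k} (hp : p ∈ X)
    (hmin : ∀ u ∈ X, ⟪p, c⟫ + μ / 2 * ‖p‖ ^ 2 ≤ ⟪u, c⟫ + μ / 2 * ‖u‖ ^ 2) :
    ∀ u ∈ X, 0 ≤ ⟪c + μ • p, u - p⟫ := by
  intro u hu
  have key : ∀ t : ℝ, 0 < t → t ≤ 1 → -⟪c + μ • p, u - p⟫ ≤ t * (|μ| / 2 * ‖u - p‖ ^ 2) := by
    intro t ht ht1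
    set w : E k := p + t • (u - p) with hw
    have hwX : w ∈ X := by
      have := hX hp hu (by linarith : (0:ℝ) ≤ 1 - t) (le_of_lt ht) (by ring)
      convert this using 1
      rw [hw]; module
    have hexp := quad_exp c w p μ
    have hwp : w - p = t • (u - p) := by rw [hw]; abel
    have hmw := hmin w hwX
    rw [hexp, hwp, real_inner_smul_right, norm_smul] at hmw
    have h0 : 0 ≤ t * ⟪c + μ • p, u - p⟫ + μ / 2 * (|t| * ‖u - p‖) ^ 2 := by
      simp only [Real.norm_eq_abs] at hmw; linarith
    have habs : |t| = t := abs_of_pos ht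
    rw [habs] at h0
    have hts : t * (t * (|μ| / 2 * ‖u - p‖ ^ 2)) ≥ -(t * ⟪c + μ • p, u - p⟫) → True := fun _ => trivial
    have : -(t * ⟪c + μ • p, u - p⟫) ≤ μ / 2 * (t * ‖u - p‖) ^ 2 := by linarith
    have hmu : μ / 2 * (t * ‖u - p‖) ^ 2 ≤ t * t * (|μ| / 2 * ‖u - p‖ ^ 2) := by
      have : μ ≤ |μ| := le_abs_self μ
      nlinarith [sq_nonneg (t * ‖u - p‖), sq_nonneg ‖u - p‖, sq_nonneg t]
    have hfin : -(t * ⟪c + μ • p, u - p⟫) ≤ t * t * (|μ| / 2 * ‖u - p‖ ^ 2) := le_trans this hmu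
    have := mul_le_mul_of_nonneg_left (le_of_lt ht) (le_of_lt ht)
    nlinarith [hfin, ht, ht1, abs_nonneg μ, sq_nonneg ‖u - p‖]
  have := small_t (by positivity) key
  linarith

-- growth: f u ≥ f p + μ/2 ‖u-p‖²

lemma growth_of_min {k : ℕ} {X : Set (E k)} (hX : Convex ℝ X) (c : E k) (μ : ℝ)
    {p : E k} (hp : p ∈ X)
    (hmin : ∀ u ∈ X, ⟪p, c⟫ + μ / 2 * ‖p‖ ^ 2 ≤ ⟪u, c⟫ + μ / 2 * ‖u‖ ^ 2) :
    ∀ u ∈ X, ⟪p, c⟫ + μ / 2 * ‖p‖ ^ 2 + μ / 2 * ‖u - p‖ ^ 2 ≤ ⟪u, c⟫ + μ / 2 * ‖u‖ ^ 2 := by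
  intro u hu
  have := vi_of_min hX c μ hp hmin u hu
  have hexp := quad_exp c u p μ
  linarith

lemma proj_exists {k : ℕ} {S : Set (E k)} (hne : S.Nonempty) (hc : IsCompact S) (x : E k) :
    ∃ p ∈ S, ∀ q ∈ S, ‖x - p‖ ≤ ‖x - q‖ := by
  obtain ⟨p, hpS, hp⟩ := hc.exists_isMinOn hne
    (Continuous.continuousOn (by continuity : Continuous fun q : E k => ‖x - q‖))
  exact ⟨p, hpS, fun q hq => hp hq⟩

lemma projOn_mem {k : ℕ} {S : Set (E k)} (hne : S.Nonempty) (hc : IsCompact S) (x : E k) :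
    projOn S x ∈ S := by
  rw [projOn, dif_pos (proj_exists hne hc x)]
  exact (proj_exists hne hc x).choose_spec.1

lemma projOn_vi {k : ℕ} {S : Set (E k)} (hne : S.Nonempty) (hc : IsCompact S)
    (hconv : Convex ℝ S) (x : E k) :
    ∀ q ∈ S, ⟪x - projOn S x, q - projOn S x⟫ ≤ 0 := by
  have hex := proj_exists hne hc x
  have hmem : hex.choose ∈ S := hex.choose_spec.1
  have hmin : ∀ q ∈ S, ‖x - hex.choose‖ ≤ ‖x - q‖ := hex.choose_spec.2
  set p := hex.choose with hp
  -- minimality of q ↦ ‖q‖² - 2⟪q,x⟫ = ⟪q, -2x⟫ + 2/2 ‖q‖²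
  have hquad : ∀ u ∈ S, ⟪p, (-2:ℝ) • x⟫ + (2:ℝ) / 2 * ‖p‖ ^ 2 ≤
      ⟪u, (-2:ℝ) • x⟫ + (2:ℝ) / 2 * ‖u‖ ^ 2 := by
    intro u hu
    have h1 := hmin u hu
    have h2 : ‖x - p‖ ^ 2 ≤ ‖x - u‖ ^ 2 := by
      have := norm_nonneg (x - p)
      nlinarith
    have e1 : ‖x - p‖ ^ 2 = ‖x‖ ^ 2 - 2 * ⟪x, p⟫ + ‖p‖ ^ 2 := by
      rw [norm_sub_sq_real]; try ring
    have e2 : ‖x - u‖ ^ 2 = ‖x‖ ^ 2 - 2 * ⟪x, u⟫ + ‖u‖ ^ 2 := by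
      rw [norm_sub_sq_real]; try ring
    have e3 : ⟪p, (-2:ℝ) • x⟫ = -2 * ⟪x, p⟫ := by
      rw [real_inner_smul_right, real_inner_comm]; try ring
    have e4 : ⟪u, (-2:ℝ) • x⟫ = -2 * ⟪x, u⟫ := by
      rw [real_inner_smul_right, real_inner_comm]; try ring
    rw [e3, e4]; nlinarith
  have hvi := vi_of_min hconv ((-2:ℝ) • x) 2 hmem hquad
  intro q hq
  have := hvi q hq
  have e : ⟪(-2:ℝ) • x + (2:ℝ) • p, q - p⟫ = -2 * ⟪x - p, q - p⟫ := by
    rw [inner_add_left, real_inner_smul_left, real_inner_smul_left, inner_sub_left]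
    ring
  rw [e] at this
  have : ⟪x - p, q - p⟫ ≤ 0 := by linarith
  rw [projOn, dif_pos hex]
  exact this

lemma pay_eq_inner {m n : ℕ} (A : Matrix (Fin m) (Fin n) ℝ) (x : E m) (y : E n) :
    pay A x y = ⟪x, toE (A.mulVec y)⟫ := rfl

lemma pay_cont_x {m n : ℕ} (A : Matrix (Fin m) (Fin n) ℝ) (y : E n) :
    Continuous fun x : E m => pay A x y + (0:ℝ) := by
  simp only [add_zero]
  exact Continuous.inner continuous_id continuous_const

lemma f_cont {m n : ℕ} (A : Matrix (Fin m) (Fin n) ℝ) (y : E n) (μ : ℝ) :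
    Continuous fun x : E m => pay A x y + μ / 2 * ‖x‖ ^ 2 := by
  exact (Continuous.inner continuous_id continuous_const).add
    (continuous_const.mul (continuous_norm.pow 2))

lemma pay_cont_y {m n : ℕ} (A : Matrix (Fin m) (Fin n) ℝ) (x : E m) :
    Continuous fun y : E n => pay A x y := by
  have : (fun y : E n => pay A x y) = fun y => ⟪toE (A.transpose.mulVec x), y⟫ := by
    funext y; rw [pay_eq_inner, inner_toE_mulVec]
  rw [this]
  exact Continuous.inner continuous_const continuous_id

lemma hmin_attained {m n : ℕ} (A : Matrix (Fin m) (Fin n) ℝ) {X : Set (E m)}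
    (hXne : X.Nonempty) (hXc : IsCompact X) (μ : ℝ) (y : E n) :
    ∃ p ∈ X, (∀ u ∈ X, pay A p y + μ / 2 * ‖p‖ ^ 2 ≤ pay A u y + μ / 2 * ‖u‖ ^ 2) ∧
      hmin A X μ y = pay A p y + μ / 2 * ‖p‖ ^ 2 := by
  obtain ⟨p, hpX, hp⟩ := hXc.exists_isMinOn hXne (f_cont A y μ).continuousOn
  refine ⟨p, hpX, fun u hu => hp hu, ?_⟩
  refine (IsLeast.csInf_eq ⟨Set.mem_image_of_mem _ hpX, ?_⟩)
  rintro r ⟨u, hu, rfl⟩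
  exact hp hu

lemma gmax_ge {m n : ℕ} (A : Matrix (Fin m) (Fin n) ℝ) {Y : Set (E n)}
    (hYc : IsCompact Y) (x : E m) {y : E n} (hy : y ∈ Y) :
    pay A x y ≤ gmax A Y x :=
  le_csSup (hYc.bddAbove_image (pay_cont_y A x).continuousOn) (Set.mem_image_of_mem _ hy)

lemma toE_mulVec_segment {m n : ℕ} (A : Matrix (Fin m) (Fin n) ℝ) (u v : E n) (t : ℝ) :
    toE (A.mulVec (u + t • (v - u))) =
      toE (A.mulVec u) + t • (toE (A.mulVec v) - toE (A.mulVec u)) := by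
  ext i
  simp [toE, Matrix.mulVec, dotProduct, WithLp.equiv_symm_apply, PiLp.toLp_apply,
    ← Finset.sum_sub_distrib, ← Finset.sum_add_distrib, Finset.mul_sum, mul_sub, mul_add]
  congr 1; ext j; ring

lemma pay_segment {m n : ℕ} (A : Matrix (Fin m) (Fin n) ℝ) (x : E m) (u v : E n) (t : ℝ) :
    pay A x (u + t • (v - u)) = pay A x u + t * (pay A x v - pay A x u) := by
  rw [pay_eq_inner, WithLp.ofLp_add, WithLp.ofLp_smul, WithLp.ofLp_sub, toE_mulVec_segment, inner_add_right, real_inner_smul_right,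
    inner_sub_right]
  rw [pay_eq_inner, pay_eq_inner]

lemma saddle {m n : ℕ} (A : Matrix (Fin m) (Fin n) ℝ) {X : Set (E m)} {Y : Set (E n)}
    (hXne : X.Nonempty) (hXc : IsCompact X) (hXconv : Convex ℝ X)
    (hYc : IsCompact Y) (hYconv : Convex ℝ Y)
    {μ : ℝ} (hμ : 0 < μ) {xμ : E m} (hxμ : xμ ∈ X)
    (hxμmin : ∀ x ∈ X,
      gmax A Y xμ + μ / 2 * ‖xμ‖ ^ 2 ≤ gmax A Y x + μ / 2 * ‖x‖ ^ 2)
    {yμ : E n} (hyμ : yμ ∈ maximinSet A X Y μ) :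
    (∀ u ∈ X, pay A xμ yμ + μ / 2 * ‖xμ‖ ^ 2 ≤ pay A u yμ + μ / 2 * ‖u‖ ^ 2) ∧
    (∀ y ∈ Y, pay A xμ y ≤ pay A xμ yμ) := by
  obtain ⟨hyμY, hyμmax⟩ := hyμ
  obtain ⟨xs, hxsX, hxsmin, hxseq⟩ := hmin_attained A hXne hXc μ yμ
  -- bound on norms over X
  obtain ⟨xR, hxRX, hxR⟩ := hXc.exists_isMaxOn hXne continuous_norm.continuousOn
  set R := ‖xR‖ with hRdef
  have hR0 : 0 ≤ R := norm_nonneg _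
  have hRb : ∀ u ∈ X, ‖u‖ ≤ R := fun u hu => hxR hu
  -- Step 3: xs is "best response stable": pay A xs y ≤ pay A xs yμ for all y ∈ Y
  have step3 : ∀ y ∈ Y, pay A xs y ≤ pay A xs yμ := by
    intro y hy
    set N : ℝ := max ‖toE (A.mulVec y)‖ ‖toE (A.mulVec yμ)‖ with hNdef
    have hN0 : 0 ≤ N := le_trans (norm_nonneg _) (le_max_left _ _)
    have hpayb : ∀ u ∈ X, ∀ y' ∈ ({y, yμ} : Set (E n)), |pay A u y'| ≤ R * N := by
      rintro u hu y' hy'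
      have h1 : |pay A u y'| ≤ ‖u‖ * ‖toE (A.mulVec y')‖ := by
        rw [pay_eq_inner]; exact abs_real_inner_le_norm _ _
      have h2 : ‖toE (A.mulVec y')‖ ≤ N := by
        rcases hy' with rfl | hy'
        · exact le_max_left _ _
        · simp only [Set.mem_singleton_iff] at hy'; subst hy'; exact le_max_right _ _
      calc |pay A u y'| ≤ ‖u‖ * ‖toE (A.mulVec y')‖ := h1
        _ ≤ R * N := by
            have := hRb u hu
            nlinarith [norm_nonneg u, norm_nonneg (toE (A.mulVec y'))]
    set C₁ : ℝ := 2 * (R * N) with hC₁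
    have hC₁0 : 0 ≤ C₁ := by positivity
    set K : ℝ := 2 * C₁ / μ + N ^ 2 with hK
    have hK0 : 0 ≤ K := by positivity
    have key : ∀ s : ℝ, 0 < s → s ≤ 1 → pay A xs y - pay A xs yμ ≤ s * K := by
      intro s hs hs1
      set t : ℝ := s ^ 2 with htdef
      have ht : 0 < t := by positivity
      have ht1 : t ≤ 1 := by nlinarith
      set yt : E n := yμ + t • (y - yμ) with hyt
      have hytY : yt ∈ Y := by
        have := hYconv hyμY hy (by linarith : (0:ℝ) ≤ 1 - t) (le_of_lt ht) (by ring)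
        convert this using 1
        rw [hyt]; module
      obtain ⟨xt, hxtX, hxtmin, hxteq⟩ := hmin_attained A hXne hXc μ yt
      -- (i) hmin yt ≤ hmin yμ
      have hi : pay A xt yt + μ / 2 * ‖xt‖ ^ 2 ≤ pay A xs yμ + μ / 2 * ‖xs‖ ^ 2 := by
        have := hyμmax yt hytY
        rw [hxteq, hxseq] at this
        exact this
      have hlin : pay A xt yt = pay A xt yμ + t * (pay A xt y - pay A xt yμ) :=
        pay_segment A xt yμ y t
      set D : ℝ := pay A xt y - pay A xt yμ with hD
      -- (ii) growth at xs
      have hii : pay A xs yμ + μ / 2 * ‖xs‖ ^ 2 + μ / 2 * ‖xt - xs‖ ^ 2 ≤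
          pay A xt yμ + μ / 2 * ‖xt‖ ^ 2 := by
        have := growth_of_min hXconv (toE (A.mulVec yμ)) μ hxsX
          (fun u hu => hxsmin u hu) xt hxtX
        exact this
      have hsum : μ / 2 * ‖xt - xs‖ ^ 2 + t * D ≤ 0 := by
        rw [hlin] at hi; linarith
      have hDC : -D ≤ C₁ := by
        have h1 := hpayb xt hxtX y (by simp)
        have h2 := hpayb xt hxtX yμ (by simp)
        rw [hD, hC₁]
        have := abs_le.mp h1
        have := abs_le.mp h2
        linarith [(abs_le.mp h1).1, (abs_le.mp h1).2, (abs_le.mp h2).1, (abs_le.mp h2).2]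
      have hD0 : D ≤ 0 := by nlinarith [sq_nonneg ‖xt - xs‖]
      have ha2 : ‖xt - xs‖ ^ 2 ≤ 2 * C₁ / μ * t := by
        have : μ / 2 * ‖xt - xs‖ ^ 2 ≤ t * C₁ := by nlinarith
        rw [div_mul_eq_mul_div, le_div_iff₀ hμ]
        nlinarith
      -- pay xs y - pay xs yμ ≤ D + 2 N ‖xs - xt‖
      have hdiff : pay A xs y - pay A xs yμ ≤ D + 2 * N * ‖xs - xt‖ := by
        have e1 : pay A xs y - pay A xt y = ⟪xs - xt, toE (A.mulVec y)⟫ := by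
          rw [pay_eq_inner, pay_eq_inner, inner_sub_left]
        have e2 : pay A xt yμ - pay A xs yμ = -⟪xs - xt, toE (A.mulVec yμ)⟫ := by
          rw [pay_eq_inner, pay_eq_inner, inner_sub_left]; ring
        have b1 : ⟪xs - xt, toE (A.mulVec y)⟫ ≤ ‖xs - xt‖ * N := by
          calc ⟪xs - xt, toE (A.mulVec y)⟫ ≤ ‖xs - xt‖ * ‖toE (A.mulVec y)‖ :=
                real_inner_le_norm _ _
            _ ≤ ‖xs - xt‖ * N := by
                have := le_max_left ‖toE (A.mulVec y)‖ ‖toE (A.mulVec yμ)‖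
                nlinarith [norm_nonneg (xs - xt)]
        have b2 : -⟪xs - xt, toE (A.mulVec yμ)⟫ ≤ ‖xs - xt‖ * N := by
          calc -⟪xs - xt, toE (A.mulVec yμ)⟫ = ⟪xs - xt, -toE (A.mulVec yμ)⟫ := by
                rw [inner_neg_right]
            _ ≤ ‖xs - xt‖ * ‖-toE (A.mulVec yμ)‖ := real_inner_le_norm _ _
            _ ≤ ‖xs - xt‖ * N := by
                rw [norm_neg]
                have := le_max_right ‖toE (A.mulVec y)‖ ‖toE (A.mulVec yμ)‖
                nlinarith [norm_nonneg (xs - xt)]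
        nlinarith [b1, b2, e1, e2]
      have hnormsym : ‖xs - xt‖ = ‖xt - xs‖ := by rw [norm_sub_rev]
      -- 2 N a ≤ a²/s + s N²
      have hfin : D + 2 * N * ‖xs - xt‖ ≤ s * K := by
        rw [hnormsym]
        set a : ℝ := ‖xt - xs‖ with hadef
        have ha0 : 0 ≤ a := norm_nonneg _
        have hamgm : 2 * N * a ≤ a ^ 2 / s + s * N ^ 2 := by
          rw [div_add' _ _ _ (ne_of_gt hs), le_div_iff₀ hs]
          nlinarith [sq_nonneg (a - s * N)]
        have has : a ^ 2 / s ≤ 2 * C₁ / μ * s := by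
          rw [div_le_iff₀ hs]
          calc a ^ 2 ≤ 2 * C₁ / μ * t := ha2
            _ = 2 * C₁ / μ * s * s := by rw [htdef]; ring
        rw [hK]
        have : 2 * C₁ / μ * s = s * (2 * C₁ / μ) := by ring
        nlinarith
      linarith
    have := small_t hK0 key
    linarith
  -- Step 4: xμ = xs
  have hgxs : gmax A Y xs = pay A xs yμ :=
    IsGreatest.csSup_eq ⟨Set.mem_image_of_mem _ hyμY, by rintro r ⟨y', hy', rfl⟩; exact step3 y' hy'⟩
  have h1 : gmax A Y xμ + μ / 2 * ‖xμ‖ ^ 2 ≤ pay A xs yμ + μ / 2 * ‖xs‖ ^ 2 := by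
    have := hxμmin xs hxsX
    rw [hgxs] at this
    exact this
  have h2 : pay A xμ yμ ≤ gmax A Y xμ := gmax_ge A hYc xμ hyμY
  have h3 : pay A xs yμ + μ / 2 * ‖xs‖ ^ 2 ≤ pay A xμ yμ + μ / 2 * ‖xμ‖ ^ 2 :=
    hxsmin xμ hxμ
  have heq : pay A xμ yμ + μ / 2 * ‖xμ‖ ^ 2 = pay A xs yμ + μ / 2 * ‖xs‖ ^ 2 := by
    linarith
  have hgrow := growth_of_min hXconv (toE (A.mulVec yμ)) μ hxsX
    (fun u hu => hxsmin u hu) xμ hxμ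
  have hxseq' : xμ = xs := by
    have : μ / 2 * ‖xμ - xs‖ ^ 2 ≤ 0 := by
      have e : pay A xμ yμ = ⟪xμ, toE (A.mulVec yμ)⟫ := rfl
      have e2 : pay A xs yμ = ⟪xs, toE (A.mulVec yμ)⟫ := rfl
      linarith [hgrow]
    have : ‖xμ - xs‖ ^ 2 ≤ 0 := by nlinarith
    have : ‖xμ - xs‖ = 0 := by nlinarith [norm_nonneg (xμ - xs), sq_nonneg ‖xμ - xs‖]
    rwa [norm_sub_eq_zero_iff] at this
  constructor
  · intro u hu
    rw [hxseq']
    exact hxsmin u hu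
  · intro y hy
    rw [hxseq']
    exact step3 y hy

lemma polytope_facts {k : ℕ} {S : Set (E k)} (h : isPolytope S) :
    S.Nonempty ∧ IsCompact S ∧ Convex ℝ S := by
  obtain ⟨s, hs, rfl⟩ := h
  refine ⟨⟨hs.choose, subset_convexHull ℝ _ hs.choose_spec⟩,
    (s.finite_toSet).isCompact_convexHull ℝ, convex_convexHull ℝ _⟩

lemma prodNorm_sq {m n : ℕ} (u : E m) (v : E n) :
    prodNorm u v ^ 2 = ‖u‖ ^ 2 + ‖v‖ ^ 2 :=
  Real.sq_sqrt (by positivity)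

lemma assemble {η μ nA P Pa Q Qb na nb nd Gx Gy : ℝ}
    (hη : 0 < η) (hμ : 0 < μ) (hnA0 : 0 ≤ nA)
    (hP : P = nd ^ 2)
    (hx : 1 / 2 * P - 1 / 2 * Pa ≤ η * Gx - 1 / 2 * na ^ 2)
    (hy : 1 / 2 * Q - 1 / 2 * Qb ≤ -(η * Gy) - 1 / 2 * nb ^ 2)
    (hkey : Gx - Gy ≤ -(μ * P) + nA * nb * nd + μ * (na * nd))
    (hlt : η * (2 * (μ ^ 2 + nA ^ 2)) < μ) :
    1 / 2 * (P + Q) - 1 / 2 * (Pa + Qb) ≤ -(η * μ / 2) * P - 1 / 4 * (na ^ 2 + nb ^ 2) := by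
  subst hP
  have hkey' : η * Gx - η * Gy ≤
      η * (-(μ * nd ^ 2) + nA * nb * nd + μ * (na * nd)) := by
    have := mul_le_mul_of_nonneg_left hkey (le_of_lt hη)
    linarith [this]
  have hab1 : η * (nA * nb * nd) ≤ 1 / 4 * nb ^ 2 + η ^ 2 * nA ^ 2 * nd ^ 2 := by
    nlinarith [sq_nonneg (1 / 2 * nb - η * nA * nd)]
  have hab2 : η * (μ * (na * nd)) ≤ 1 / 4 * na ^ 2 + η ^ 2 * μ ^ 2 * nd ^ 2 := by
    nlinarith [sq_nonneg (1 / 2 * na - η * μ * nd)]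
  have h2 : η * (μ ^ 2 + nA ^ 2) ≤ μ / 2 := by linarith
  have h3 : η * (η * (μ ^ 2 + nA ^ 2)) ≤ η * (μ / 2) :=
    mul_le_mul_of_nonneg_left h2 (le_of_lt hη)
  have h4 : η * (η * (μ ^ 2 + nA ^ 2)) * nd ^ 2 ≤ η * (μ / 2) * nd ^ 2 :=
    mul_le_mul_of_nonneg_right h3 (sq_nonneg nd)
  nlinarith [hx, hy, hkey', hab1, hab2, h4]

/-- Monotone decrease of the distance of the AsymP-GDA iterates to any
solution `(xμ, yμ)` of the asymmetrically perturbed game, for small enough learning rates. -/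
theorem asymp_gda_monotone_distance_decrease
    {m n : ℕ} (A : Matrix (Fin m) (Fin n) ℝ) (X : Set (E m)) (Y : Set (E n))
    (hX : isPolytope X) (hY : isPolytope Y)
    (μ η : ℝ) (hμ : 0 < μ) (hη : 0 < η)
    (hηlt : η < μ / (2 * (μ ^ 2 + matNorm A ^ 2)))
    -- `xμ` is the (unique) minimax strategy of the asymmetrically perturbed game
    (xμ : E m) (hxμ : xμ ∈ X)
    (hxμmin : ∀ x ∈ X,
      gmax A Y xμ + μ / 2 * ‖xμ‖ ^ 2 ≤ gmax A Y x + μ / 2 * ‖x‖ ^ 2)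
    (x : ℕ → E m) (y : ℕ → E n)
    (hx1 : x 1 ∈ X) (hy1 : y 1 ∈ Y)
    (hxup : ∀ t, 1 ≤ t →
      x (t + 1) = projOn X (x t - η • (toE (A.mulVec (y t)) + μ • x t)))
    (hyup : ∀ t, 1 ≤ t →
      y (t + 1) = projOn Y (y t + η • toE (A.transpose.mulVec (x (t + 1))))) :
    ∀ t, 1 ≤ t → ∀ yμ ∈ maximinSet A X Y μ,
      1 / 2 * prodNorm (xμ - x (t + 1)) (yμ - y (t + 1)) ^ 2 -
          1 / 2 * prodNorm (xμ - x t) (yμ - y t) ^ 2 ≤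
        -(η * μ / 2) * ‖xμ - x (t + 1)‖ ^ 2 -
          1 / 4 * prodNorm (x t - x (t + 1)) (y t - y (t + 1)) ^ 2 := by
  obtain ⟨hXne, hXc, hXconv⟩ := polytope_facts hX
  obtain ⟨hYne, hYc, hYconv⟩ := polytope_facts hY
  intro t ht yμ hyμ
  obtain ⟨hsad1, hsad2⟩ := saddle A hXne hXc hXconv hYc hYconv hμ hxμ hxμmin hyμ
  have vix : ∀ u ∈ X, 0 ≤ ⟪toE (A.mulVec yμ) + μ • xμ, u - xμ⟫ :=
    vi_of_min hXconv (toE (A.mulVec yμ)) μ hxμ (fun u hu => hsad1 u hu)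
  -- opaque operator norm
  have hbound : ∀ v : E n, ‖toE (A.mulVec v)‖ ≤ matNorm A * ‖v‖ := norm_toE_mulVec_le A
  have hnA0' : 0 ≤ matNorm A := norm_nonneg _
  obtain ⟨nA, hnAeq⟩ : ∃ c, matNorm A = c := ⟨_, rfl⟩
  rw [hnAeq] at hηlt
  simp only [hnAeq] at hbound
  have hnA0 : 0 ≤ nA := hnAeq ▸ hnA0'
  clear hnAeq
  -- abbreviations (plain lets to keep terms syntactic)
  set a := x t with hadef
  set a' := x (t + 1) with ha'def
  set b := y t with hbdef
  set b' := y (t + 1) with hb'def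
  set gx : E m := toE (A.mulVec b) + μ • a with hgx
  set gy : E n := toE (A.transpose.mulVec a') with hgy
  have ha' : a' = projOn X (a - η • gx) := hxup t ht
  have hb' : b' = projOn Y (b + η • gy) := hyup t ht
  have ha'X : a' ∈ X := by rw [ha']; exact projOn_mem hXne hXc _
  have hb'Y : b' ∈ Y := by rw [hb']; exact projOn_mem hYne hYc _
  have vx : ⟪(a - η • gx) - a', xμ - a'⟫ ≤ 0 := by
    have := projOn_vi hXne hXc hXconv (a - η • gx) xμ hxμ
    rwa [← ha'] at this
  have vy : ⟪(b + η • gy) - b', yμ - b'⟫ ≤ 0 := by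
    have := projOn_vi hYne hYc hYconv (b + η • gy) yμ hyμ.1
    rwa [← hb'] at this
  set d : E m := xμ - a' with hd
  set e : E n := yμ - b' with he
  set Gx : ℝ := ⟪gx, d⟫ with hGx
  set Gy : ℝ := ⟪gy, e⟫ with hGy
  -- x-descent
  have hx_desc : 1 / 2 * ‖d‖ ^ 2 - 1 / 2 * ‖xμ - a‖ ^ 2 ≤ η * Gx - 1 / 2 * ‖a - a'‖ ^ 2 := by
    have h1 : ⟪a - a', d⟫ - η * Gx ≤ 0 := by
      have e0 : a - η • gx - a' = (a - a') - η • gx := by abel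
      rw [hd] at vx
      rw [e0, inner_sub_left, real_inner_smul_left] at vx
      rw [hGx, hd]
      linarith
    have h2 : ‖xμ - a‖ ^ 2 = ‖d‖ ^ 2 - 2 * ⟪d, a - a'⟫ + ‖a - a'‖ ^ 2 := by
      have e2 : xμ - a = d - (a - a') := by rw [hd]; abel
      rw [e2, norm_sub_sq_real]; try ring
    have h3 : ⟪d, a - a'⟫ = ⟪a - a', d⟫ := real_inner_comm _ _
    linarith
  -- y-descent
  have hy_desc : 1 / 2 * ‖e‖ ^ 2 - 1 / 2 * ‖yμ - b‖ ^ 2 ≤ -(η * Gy) - 1 / 2 * ‖b - b'‖ ^ 2 := by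
    have h1 : ⟪b - b', e⟫ + η * Gy ≤ 0 := by
      have e0 : b + η • gy - b' = (b - b') + η • gy := by abel
      rw [he] at vy
      rw [e0, inner_add_left, real_inner_smul_left] at vy
      rw [hGy, he]
      linarith
    have h2 : ‖yμ - b‖ ^ 2 = ‖e‖ ^ 2 - 2 * ⟪e, b - b'⟫ + ‖b - b'‖ ^ 2 := by
      have e2 : yμ - b = e - (b - b') := by rw [he]; abel
      rw [e2, norm_sub_sq_real]; try ring
    have h3 : ⟪e, b - b'⟫ = ⟪b - b', e⟫ := real_inner_comm _ _
    linarith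
  -- key bound on Gx - Gy
  have hkey : Gx - Gy ≤ -(μ * ‖d‖ ^ 2) + nA * ‖b - b'‖ * ‖d‖ + μ * (‖a - a'‖ * ‖d‖) := by
    have hGxdec : Gx = ⟪toE (A.mulVec b'), d⟫ + μ * ⟪a', d⟫ +
        ⟪toE (A.mulVec (b - b')), d⟫ + μ * ⟪a - a', d⟫ := by
      rw [hGx, hgx]
      have e0 : toE (A.mulVec b) = toE (A.mulVec b') + toE (A.mulVec (b - b')) := by
        rw [← mulVec_sub']; abel
      rw [e0, inner_add_left, inner_add_left, real_inner_smul_left]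
      have e1 : ⟪a, d⟫ = ⟪a', d⟫ + ⟪a - a', d⟫ := by
        rw [← inner_add_left]; congr 1; abel
      rw [e1]; ring
    have hGydec : Gy = ⟪a', toE (A.mulVec yμ)⟫ - ⟪a', toE (A.mulVec b')⟫ := by
      rw [hGy, hgy, ← inner_toE_mulVec, he, WithLp.ofLp_sub, ← mulVec_sub', inner_sub_right]
    have hviy : ⟪xμ, toE (A.mulVec b')⟫ ≤ ⟪xμ, toE (A.mulVec yμ)⟫ := hsad2 b' hb'Y
    have hvix' : 0 ≤ ⟪toE (A.mulVec yμ) + μ • xμ, a' - xμ⟫ := vix a' ha'X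
    have hvix'' : ⟪toE (A.mulVec yμ), d⟫ + μ * ⟪xμ, d⟫ ≤ 0 := by
      have e1 : a' - xμ = -d := by rw [hd]; abel
      rw [e1, inner_neg_right, inner_add_left, real_inner_smul_left] at hvix'
      linarith
    have hsplit1 : ⟪toE (A.mulVec b'), d⟫ =
        ⟪xμ, toE (A.mulVec b')⟫ - ⟪a', toE (A.mulVec b')⟫ := by
      rw [real_inner_comm, hd, inner_sub_left]
    have hsplit2 : ⟪toE (A.mulVec yμ), d⟫ =
        ⟪xμ, toE (A.mulVec yμ)⟫ - ⟪a', toE (A.mulVec yμ)⟫ := by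
      rw [real_inner_comm, hd, inner_sub_left]
    have hsplit3 : ⟪a', d⟫ = ⟪xμ, d⟫ - ‖d‖ ^ 2 := by
      have e1 : ⟪a', d⟫ = ⟪xμ - d, d⟫ := by congr 1; rw [hd]; abel
      rw [e1, inner_sub_left, real_inner_self_eq_norm_sq]
    have herr1 : ⟪toE (A.mulVec (b - b')), d⟫ ≤ nA * ‖b - b'‖ * ‖d‖ := by
      calc ⟪toE (A.mulVec (b - b')), d⟫ ≤ ‖toE (A.mulVec (b - b'))‖ * ‖d‖ :=
            real_inner_le_norm _ _
        _ ≤ nA * ‖b - b'‖ * ‖d‖ := by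
            have := hbound (b - b')
            rw [WithLp.ofLp_sub] at this
            nlinarith [norm_nonneg d, norm_nonneg (toE (A.mulVec (b - b')))]
    have herr2 : ⟪a - a', d⟫ ≤ ‖a - a'‖ * ‖d‖ := real_inner_le_norm _ _
    nlinarith [hμ]
  rw [prodNorm_sq, prodNorm_sq, prodNorm_sq]
  have hlt' : η * (2 * (μ ^ 2 + nA ^ 2)) < μ := by
    have hden : 0 < 2 * (μ ^ 2 + nA ^ 2) := by positivity
    have := (lt_div_iff₀ hden).mp hηlt
    linarith
  exact assemble hη hμ hnA0 rfl hx_desc hy_desc hkey hlt'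
end
end
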